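/- arXiv:1710.05250 — 3 statements merged into one kernel-verified Lean document; each statement's English description precedes it below -/
import Mathlib

section
/- For every natural number n ≥ 1, the clique number of the commuting graph of Sₙ = ⟨a, b | a^{n+1} = b² = 0, aba = 0, b aⁱ b = 0 ∀ i ≥ 1⟩ equals 2n − 1. -/
/-!
Every element of `Sₙ` is `0`, `aᵏ` (`1 ≤ k ≤ n`), `aⁱb` (`0 ≤ i ≤ n`) or `baʲ` (`1 ≤ j ≤ n`), and
these are pairwise distinct: the left action of `a` and `b` on these normal forms (with an adjoined
identity) satisfies the defining relations, so it descends to `Sₙ`, and the image of the identity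
recovers the normal form. Now `aⁿb` and `baⁿ` annihilate everything, and a product of two elements
that both contain `b` vanishes; hence the centre is `{0, aⁿb, baⁿ}`, and the `2n - 1` noncentral
elements `aⁱb`, `baʲ` pairwise commute. Conversely `aᵏ` and `aⁿ⁻ᵏb` never commute
(`aᵏ · aⁿ⁻ᵏb = aⁿb` while `aⁿ⁻ᵏb · aᵏ` is `baⁿ` or `0`), so a clique meets each of the `n` pairs
`{aᵏ, aⁿ⁻ᵏb}` at most once, besides the `n - 1` elements `baʲ`.
-/

/-- The commuting graph of a semigroup: vertices are the non-central
elements, two distinct vertices are adjacent iff they commute. -/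
def CommutingGraph (S : Type*) [Semigroup S] :
    SimpleGraph {x : S // x ∉ Set.center S} where
  Adj a b := a ≠ b ∧ (a : S) * b = (b : S) * a
  symm := ⟨fun _ _ ⟨h, hc⟩ => ⟨h.symm, hc.symm⟩⟩
  loopless := ⟨fun _ ⟨h, _⟩ => h rfl⟩

/-- The free semigroup with zero on the two generators `a = of false`, `b = of true`. -/
abbrev W2 := WithZero (FreeSemigroup Bool)

/-- The generator `a`. -/
def ga : FreeSemigroup Bool := FreeSemigroup.of false

/-- The generator `b`. -/
def gb : FreeSemigroup Bool := FreeSemigroup.of true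

/-- `fsPow x k = x^(k+1)` (positive powers in a semigroup). -/
def fsPow (x : FreeSemigroup Bool) : ℕ → FreeSemigroup Bool
  | 0 => x
  | k + 1 => fsPow x k * x

/-- `apow i` is `a^i` for `i ≥ 1` (junk value `a` at `i = 0`). -/
def apow (i : ℕ) : FreeSemigroup Bool := fsPow ga (i - 1)

/-- The defining relations of `Sₙ`: `a^(n+1) = b² = 0`, `aba = 0`, `b aⁱ b = 0` for `i ≥ 1`. -/
def SnRel (n : ℕ) : W2 → W2 → Prop := fun p q =>
  (p = ((apow (n + 1) : FreeSemigroup Bool) : W2) ∧ q = 0) ∨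
  (p = ((gb * gb : FreeSemigroup Bool) : W2) ∧ q = 0) ∨
  (p = ((ga * gb * ga : FreeSemigroup Bool) : W2) ∧ q = 0) ∨
  (∃ i : ℕ, 1 ≤ i ∧ p = ((gb * apow i * gb : FreeSemigroup Bool) : W2) ∧ q = 0)

/-- The congruence generated by the relations of `Sₙ`. -/
def SnCon (n : ℕ) : Con W2 := conGen (SnRel n)

/-- The semigroup `Sₙ = ⟨a, b | a^(n+1) = b² = 0, aba = baⁱb = 0 ∀ i ≥ 1⟩`. -/
def Sn (n : ℕ) : Type := (SnCon n).Quotient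

instance (n : ℕ) : Semigroup (Sn n) := Con.semigroup _

/-- The canonical projection onto `Sₙ`. -/
def smk (n : ℕ) : W2 → Sn n := (SnCon n).toQuotient

lemma SimpleGraph.cliqueNum_eq_of_isNClique {α : Type*} {G : SimpleGraph α} {N : ℕ}
    {s : Finset α} (hs : G.IsNClique N s)
    (hle : ∀ t : Finset α, G.IsClique (t : Set α) → t.card ≤ N) :
    G.cliqueNum = N := by
  have hbound : ∀ k ∈ {k | ∃ t, G.IsNClique k t}, k ≤ N := by
    rintro _ ⟨t, ht⟩
    exact ht.card_eq ▸ hle t ht.isClique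
  obtain ⟨t, ht⟩ := G.exists_isNClique_cliqueNum
  exact le_antisymm (hbound _ ⟨t, ht⟩) (le_csSup ⟨N, hbound⟩ ⟨s, hs⟩)

lemma CommutingGraph.isClique_iff {S : Type*} [Semigroup S]
    {s : Set {x : S // x ∉ Set.center S}} :
    (CommutingGraph S).IsClique s ↔ s.Pairwise fun x y => Commute (x : S) y :=
  ⟨fun h _ hx _ hy hne => (h hx hy hne).2, fun h _ hx _ hy hne => ⟨hne, h hx hy hne⟩⟩

lemma ga_mul_apow {k : ℕ} (hk : 1 ≤ k) : ga * apow k = apow (k + 1) := by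
  induction k, hk using Nat.le_induction with
  | base => rfl
  | succ k hk ih =>
    obtain ⟨k, rfl⟩ := Nat.exists_eq_add_of_le' hk
    change ga * (apow (k + 1) * ga) = apow (k + 2) * ga
    rw [← mul_assoc, ih]

instance inst_s6 (n : ℕ) : SemigroupWithZero (Sn n) where
  zero := smk n 0
  zero_mul x := Con.induction_on (c := SnCon n) x fun w => congrArg (smk n) (zero_mul w)
  mul_zero x := Con.induction_on (c := SnCon n) x fun w => congrArg (smk n) (mul_zero w)

section Relations

variable {n : ℕ}

lemma smk_coe_mul (u v : FreeSemigroup Bool) :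
    smk n ((u * v : FreeSemigroup Bool) : W2) = smk n (u : W2) * smk n (v : W2) := rfl

lemma smk_eq_zero_of_snRel {w : W2} (h : SnRel n w 0) : smk n w = 0 :=
  (SnCon n).eq.2 (ConGen.Rel.of _ _ h)

lemma smk_apow_succ_eq_zero : smk n (apow (n + 1) : W2) = 0 :=
  smk_eq_zero_of_snRel (Or.inl ⟨rfl, rfl⟩)

lemma smk_gb_mul_gb_eq_zero : smk n ((gb * gb : FreeSemigroup Bool) : W2) = 0 :=
  smk_eq_zero_of_snRel (Or.inr (Or.inl ⟨rfl, rfl⟩))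

lemma smk_ga_mul_gb_mul_ga_eq_zero : smk n ((ga * gb * ga : FreeSemigroup Bool) : W2) = 0 :=
  smk_eq_zero_of_snRel (Or.inr (Or.inr (Or.inl ⟨rfl, rfl⟩)))

lemma smk_gb_mul_apow_mul_gb_eq_zero {i : ℕ} (hi : 1 ≤ i) :
    smk n ((gb * apow i * gb : FreeSemigroup Bool) : W2) = 0 :=
  smk_eq_zero_of_snRel (Or.inr (Or.inr (Or.inr ⟨i, hi, rfl, rfl⟩)))

lemma smk_ga_mul_gb_mul_apow_eq_zero {j : ℕ} (hj : 1 ≤ j) :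
    smk n ((ga * gb * apow j : FreeSemigroup Bool) : W2) = 0 := by
  obtain ⟨j, rfl⟩ := Nat.exists_eq_add_of_le' hj
  rcases j with _ | j
  · exact smk_ga_mul_gb_mul_ga_eq_zero
  · rw [← ga_mul_apow (Nat.le_add_left 1 j), ← mul_assoc, smk_coe_mul,
      smk_ga_mul_gb_mul_ga_eq_zero, zero_mul]

lemma smk_surjective : Function.Surjective (smk n) := Quotient.mk''_surjective

end Relations

-- Normal forms in `Sₙ¹`: `A k = aᵏ` (`A 0` is the adjoined identity), `AB i = aⁱb`, `BA j = baʲ`.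
inductive SnForm
  | zero
  | A (k : ℕ)
  | AB (i : ℕ)
  | BA (j : ℕ)

namespace SnForm

variable {n : ℕ}

def mulA (n : ℕ) : SnForm → SnForm
  | A k => if k < n then A (k + 1) else zero
  | AB i => if i < n then AB (i + 1) else zero
  | _ => zero

def mulB : SnForm → SnForm
  | A 0 => AB 0
  | A (k + 1) => BA (k + 1)
  | _ => zero

@[simp] lemma mulA_BA (j : ℕ) : mulA n (BA j) = zero := rfl
@[simp] lemma mulB_zero : mulB zero = zero := rfl
@[simp] lemma mulB_AB (i : ℕ) : mulB (AB i) = zero := rfl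
@[simp] lemma mulB_BA (j : ℕ) : mulB (BA j) = zero := rfl
@[simp] lemma mulB_A_zero : mulB (A 0) = AB 0 := rfl
@[simp] lemma mulB_A_succ (k : ℕ) : mulB (A (k + 1)) = BA (k + 1) := rfl
lemma mulB_A {k : ℕ} (hk : k ≠ 0) : mulB (A k) = BA k := by
  obtain ⟨k, rfl⟩ := Nat.exists_eq_succ_of_ne_zero hk; rfl

@[simp] lemma mulA_iterate_zero (m : ℕ) : (mulA n)^[m] zero = zero :=
  Function.iterate_fixed rfl m

@[simp] lemma mulA_iterate_BA {m : ℕ} (hm : m ≠ 0) (j : ℕ) : (mulA n)^[m] (BA j) = zero := by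
  obtain ⟨m, rfl⟩ := Nat.exists_eq_succ_of_ne_zero hm
  rw [Function.iterate_succ_apply, mulA_BA, mulA_iterate_zero]

lemma mulA_iterate_A {k : ℕ} (hk : k ≤ n) (m : ℕ) :
    (mulA n)^[m] (A k) = if k + m ≤ n then A (k + m) else zero := by
  induction m with
  | zero => simp [hk]
  | succ m ih =>
    rw [Function.iterate_succ_apply', ih]
    split_ifs <;> simp only [mulA] <;> (try split_ifs) <;> first | rfl | omega

lemma mulA_iterate_AB {i : ℕ} (hi : i ≤ n) (m : ℕ) :
    (mulA n)^[m] (AB i) = if i + m ≤ n then AB (i + m) else zero := by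
  induction m with
  | zero => simp [hi]
  | succ m ih =>
    rw [Function.iterate_succ_apply', ih]
    split_ifs <;> simp only [mulA] <;> (try split_ifs) <;> first | rfl | omega

lemma mulB_mulA_iterate_AB {i : ℕ} (hi : i ≤ n) (m : ℕ) :
    mulB ((mulA n)^[m] (AB i)) = zero := by
  rw [mulA_iterate_AB hi]; split_ifs <;> rfl

lemma mulA_iterate_succ_eq_zero (e : SnForm) : (mulA n)^[n + 1] e = zero := by
  rcases e with _ | k | i | j
  · simp
  · by_cases hk : k ≤ n
    · simp [mulA_iterate_A hk, show ¬k + (n + 1) ≤ n by omega]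
    · rw [Function.iterate_succ_apply]; simp [mulA, show ¬k < n by omega]
  · by_cases hi : i ≤ n
    · simp [mulA_iterate_AB hi, show ¬i + (n + 1) ≤ n by omega]
    · rw [Function.iterate_succ_apply]; simp [mulA, show ¬i < n by omega]
  · simp

lemma mulB_mulB (e : SnForm) : mulB (mulB e) = zero := by
  rcases e with _ | (_ | k) | _ | _ <;> rfl

lemma mulA_mulB_mulA (e : SnForm) : mulA n (mulB (mulA n e)) = zero := by
  rcases e with _ | k | i | j <;> simp only [mulA] <;> (try split_ifs) <;> rfl

lemma mulB_mulA_iterate_mulB {i : ℕ} (hi : i ≠ 0) (e : SnForm) :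
    mulB ((mulA n)^[i] (mulB e)) = zero := by
  rcases e with _ | (_ | k) | _ | _ <;> simp [mulB_mulA_iterate_AB, mulA_iterate_BA hi]

def lmul (n : ℕ) : SnForm → SnForm → SnForm
  | zero, _ => zero
  | A k, f => (mulA n)^[k] f
  | AB i, f => (mulA n)^[i] (mulB f)
  | BA j, f => mulB ((mulA n)^[j] f)

def Reduced (n : ℕ) : SnForm → Prop
  | zero => True
  | A k => 1 ≤ k ∧ k ≤ n
  | AB i => i ≤ n
  | BA j => 1 ≤ j ∧ j ≤ n

def Noncentral (n : ℕ) : SnForm → Prop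
  | zero => False
  | A k => 1 ≤ k ∧ k ≤ n
  | AB i => i < n
  | BA j => 1 ≤ j ∧ j < n

-- Noncentral forms get slots in `[0, 2n - 1)`, and only `A k` and `AB (n - k)` share one.
def slot (n : ℕ) : SnForm → ℕ
  | zero => 0
  | A k => n - k
  | AB i => i
  | BA j => n - 1 + j

def cliqueForm (n m : ℕ) : SnForm :=
  if m < n then AB m else BA (m - n + 1)

lemma reduced_mulA {e : SnForm} (he : Reduced n e) : Reduced n (mulA n e) := by
  rcases e with _ | k | i | j <;> simp only [mulA] <;> (try split_ifs) <;>
    simp only [Reduced] at he ⊢ <;> omega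

lemma reduced_mulB {e : SnForm} (he : Reduced n e) : Reduced n (mulB e) := by
  rcases e with _ | (_ | k) | _ | _ <;> simp_all [Reduced, mulB]

lemma Noncentral.reduced {e : SnForm} (he : Noncentral n e) : Reduced n e := by
  cases e <;> simp only [Noncentral, Reduced] at he ⊢ <;> omega

lemma lmul_A_zero {e : SnForm} (he : Reduced n e) : lmul n e (A 0) = e := by
  rcases e with _ | k | i | j <;> simp only [Reduced] at he
  · rfl
  · simp [lmul, mulA_iterate_A, he.2]
  · simp [lmul, mulA_iterate_AB, he]
  · simp [lmul, mulA_iterate_A, he.2, mulB_A (k := j) (by omega)]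

lemma Noncentral.slot_lt {e : SnForm} (he : Noncentral n e) : slot n e < 2 * n - 1 := by
  cases e <;> simp only [Noncentral, slot] at he ⊢ <;> omega

lemma lmul_A_AB_ne {k i : ℕ} (hk : 1 ≤ k) (hki : k + i = n) :
    lmul n (A k) (AB i) ≠ lmul n (AB i) (A k) := by
  rw [lmul, lmul, mulA_iterate_AB (by omega), if_pos (by omega), mulB_A (by omega)]
  rcases i with _ | i
  · simp
  · simp [mulA_iterate_BA]

lemma eq_of_lmul_comm_of_slot_eq {e f : SnForm} (he : Noncentral n e) (hf : Noncentral n f)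
    (hc : lmul n e f = lmul n f e) (hs : slot n e = slot n f) : e = f := by
  cases e <;> cases f <;>
    simp only [Noncentral, slot, A.injEq, AB.injEq, BA.injEq, reduceCtorEq] at he hf hs ⊢ <;>
    first
    | omega
    | exact lmul_A_AB_ne he.1 (by omega) hc
    | exact lmul_A_AB_ne hf.1 (by omega) hc.symm

lemma slot_cliqueForm {m : ℕ} (hm : m < 2 * n - 1) : slot n (cliqueForm n m) = m := by
  unfold cliqueForm
  split_ifs
  · rfl
  · simp only [slot]; omega

lemma noncentral_cliqueForm {m : ℕ} (hm : m < 2 * n - 1) : Noncentral n (cliqueForm n m) := by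
  unfold cliqueForm; split_ifs <;> simp only [Noncentral] <;> omega

lemma lmul_cliqueForm (m₁ m₂ : ℕ) :
    lmul n (cliqueForm n m₁) (cliqueForm n m₂) = zero := by
  unfold cliqueForm
  split_ifs <;> simp (disch := omega) only [lmul, mulB_AB, mulB_BA, mulB_zero, mulA_iterate_zero,
    mulB_mulA_iterate_AB, mulA_iterate_BA]

lemma lmul_comm_of_not_noncentral {e f : SnForm} (he : Reduced n e) (hnc : ¬Noncentral n e)
    (hf : Reduced n f) : lmul n e f = lmul n f e := by
  suffices lmul n e f = zero ∧ lmul n f e = zero by rw [this.1, this.2]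
  rcases e with _ | k | i | i <;> simp only [Reduced, Noncentral] at he hnc
  · cases f <;> simp [lmul]
  · omega
  all_goals
    obtain rfl : i = n := by omega
    rcases f with _ | (_ | k) | i' | j <;> simp only [Reduced] at hf <;> try omega
    all_goals
      simp (disch := omega) [lmul, mulA_iterate_A, mulA_iterate_AB, mulA_iterate_BA]
      try split_ifs <;> rfl

lemma Noncentral.exists_lmul_ne {e : SnForm} (he : Noncentral n e) :
    ∃ f, Reduced n f ∧ lmul n e f ≠ lmul n f e := by
  rcases e with _ | k | i | j <;> simp only [Noncentral] at he
  · refine ⟨AB 0, Nat.zero_le n, ?_⟩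
    simp [lmul, mulA_iterate_AB, mulB_A (k := k) (by omega), he.2]
  · refine ⟨A 1, ⟨le_rfl, by omega⟩, ?_⟩
    rcases i with _ | i <;> simp [lmul, mulA, he]
  · refine ⟨A 1, ⟨le_rfl, by omega⟩, ?_⟩
    simp [lmul, mulA_iterate_A (by omega : 1 ≤ n), Nat.add_comm 1 j, Nat.succ_le_of_lt he.2]

def word : SnForm → W2
  | zero => 0
  | A k => (apow k : FreeSemigroup Bool)
  | AB 0 => (gb : FreeSemigroup Bool)
  | AB (i + 1) => (apow (i + 1) * gb : FreeSemigroup Bool)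
  | BA j => (gb * apow j : FreeSemigroup Bool)

end SnForm

open SnForm

def genRep (n : ℕ) : FreeSemigroup Bool →ₙ* Function.End SnForm :=
  FreeSemigroup.lift fun t => cond t mulB (mulA n)

lemma genRep_apply_zero {n : ℕ} (u : FreeSemigroup Bool) : genRep n u zero = zero := by
  induction u using FreeSemigroup.recOnMul with
  | ih1 t => cases t <;> rfl
  | ih2 t v _ hv => rw [map_mul]; exact (congrArg (genRep n (.of t)) hv).trans (by cases t <;> rfl)

def leftRep (n : ℕ) : W2 →ₙ* Function.End SnForm where
  toFun := WithZero.recZeroCoe (fun _ => zero) (genRep n)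
  map_mul' u v := by
    induction u using WithZero.recZeroCoe <;> induction v using WithZero.recZeroCoe
    · rfl
    · rfl
    · funext e; exact (genRep_apply_zero _).symm
    · exact map_mul (genRep n) _ _

section

variable {n : ℕ}

lemma leftRep_mul_apply (u v : W2) (e : SnForm) :
    leftRep n (u * v) e = leftRep n u (leftRep n v e) := by
  rw [map_mul]; rfl

lemma leftRep_apow {k : ℕ} (hk : 1 ≤ k) : leftRep n (apow k : W2) = (mulA n)^[k] := by
  induction k, hk using Nat.le_induction with
  | base => rfl
  | succ k hk ih =>
    funext e
    rw [← ga_mul_apow hk, WithZero.coe_mul, leftRep_mul_apply, ih, Function.iterate_succ_apply']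
    rfl

lemma leftRep_word {e : SnForm} (he : Reduced n e) : leftRep n e.word = lmul n e := by
  funext f
  rcases e with _ | k | (_ | i) | j
  · rfl
  · exact congrFun (leftRep_apow he.1) f
  · rfl
  · rw [word, WithZero.coe_mul, leftRep_mul_apply, leftRep_apow (Nat.le_add_left 1 i)]; rfl
  · rw [word, WithZero.coe_mul, leftRep_mul_apply, leftRep_apow he.1]; rfl

lemma snCon_le_ker : SnCon n ≤ Con.ker (leftRep n) := by
  refine Con.conGen_le.2 fun p q h => ?_
  rcases h with ⟨rfl, rfl⟩ | ⟨rfl, rfl⟩ | ⟨rfl, rfl⟩ | ⟨i, hi, rfl, rfl⟩ <;> funext e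
  · rw [leftRep_apow (Nat.le_add_left 1 n)]
    exact mulA_iterate_succ_eq_zero e
  · exact mulB_mulB e
  · exact mulA_mulB_mulA e
  · rw [WithZero.coe_mul, WithZero.coe_mul, leftRep_mul_apply, leftRep_mul_apply,
      leftRep_apow hi]
    exact mulB_mulA_iterate_mulB (by omega) e

end

namespace Sn

variable {n : ℕ}

def act (x : Sn n) : Function.End SnForm :=
  (SnCon n).liftOn x (leftRep n) fun _ _ h => snCon_le_ker h

def nf (x : Sn n) : SnForm := x.act (A 0)

def ofForm (n : ℕ) (e : SnForm) : Sn n := smk n e.word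

def a (n : ℕ) : Sn n := smk n (ga : W2)

def b (n : ℕ) : Sn n := smk n (gb : W2)

lemma act_mul (x y : Sn n) : (x * y).act = x.act * y.act :=
  Con.induction_on₂ (c := SnCon n) x y fun u v => map_mul (leftRep n) u v

lemma nf_mul_eq_act (x y : Sn n) : (x * y).nf = x.act y.nf := by
  rw [nf, act_mul]; rfl

lemma act_ofForm {e : SnForm} (he : Reduced n e) : (ofForm n e).act = lmul n e :=
  leftRep_word he

lemma nf_ofForm {e : SnForm} (he : Reduced n e) : (ofForm n e).nf = e := by
  rw [nf, act_ofForm he, lmul_A_zero he]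

lemma ofForm_AB_succ_eq_zero : ofForm n (AB (n + 1)) = 0 := by
  rw [ofForm, word, smk_coe_mul, smk_apow_succ_eq_zero, zero_mul]

lemma a_mul_ofForm_AB (i : ℕ) : a n * ofForm n (AB i) = ofForm n (AB (i + 1)) := by
  rcases i with _ | i
  · rfl
  · rw [a, ofForm, ofForm, word, word, ← smk_coe_mul, ← mul_assoc,
      ga_mul_apow (Nat.le_add_left 1 i)]

lemma a_mul_ofForm {e : SnForm} (he : Reduced n e) : a n * ofForm n e = ofForm n (mulA n e) := by
  rcases e with _ | k | i | j <;> simp only [Reduced] at he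
  · exact mul_zero _
  · rw [a, ofForm, word, ← smk_coe_mul, ga_mul_apow he.1]
    simp only [mulA]
    split_ifs with hk
    · rfl
    · obtain rfl : k = n := by omega
      exact smk_apow_succ_eq_zero
  · rw [a_mul_ofForm_AB]
    simp only [mulA]
    split_ifs with hi
    · rfl
    · obtain rfl : i = n := by omega
      exact ofForm_AB_succ_eq_zero
  · rw [a, ofForm, word, ← smk_coe_mul, ← mul_assoc]
    exact smk_ga_mul_gb_mul_apow_eq_zero he.1

lemma b_mul_ofForm {e : SnForm} (he : Reduced n e) : b n * ofForm n e = ofForm n (mulB e) := by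
  rcases e with _ | k | (_ | i) | j <;> simp only [Reduced] at he
  · exact mul_zero _
  · rw [mulB_A (by omega)]; rfl
  · exact smk_gb_mul_gb_eq_zero
  · rw [b, ofForm, word, ← smk_coe_mul, ← mul_assoc]
    exact smk_gb_mul_apow_mul_gb_eq_zero (Nat.le_add_left 1 i)
  · rw [b, ofForm, word, ← smk_coe_mul, ← mul_assoc, smk_coe_mul, smk_gb_mul_gb_eq_zero,
      zero_mul]
    rfl

lemma nf_a_mul (y : Sn n) : (a n * y).nf = mulA n y.nf := nf_mul_eq_act _ _

lemma nf_b_mul (y : Sn n) : (b n * y).nf = mulB y.nf := nf_mul_eq_act _ _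

lemma reduced_nf_and_ofForm_nf (x : Sn n) : Reduced n x.nf ∧ ofForm n x.nf = x := by
  obtain ⟨w, rfl⟩ := smk_surjective x
  induction w using WithZero.recZeroCoe with
  | zero => exact ⟨trivial, rfl⟩
  | coe u =>
    induction u using FreeSemigroup.recOnMul with
    | ih1 t =>
      cases t
      · change Reduced n (mulA n (A 0)) ∧ ofForm n (mulA n (A 0)) = a n
        rcases Nat.eq_zero_or_pos n with rfl | hn
        · exact ⟨trivial, smk_apow_succ_eq_zero.symm⟩
        · rw [show mulA n (A 0) = A 1 from if_pos hn]
          exact ⟨⟨le_rfl, hn⟩, rfl⟩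
      · exact ⟨Nat.zero_le n, rfl⟩
    | ih2 t v _ ih =>
      obtain ⟨hred, hv⟩ := ih
      cases t
      · change Reduced n (a n * smk n v).nf ∧ ofForm n (a n * smk n v).nf = a n * smk n v
        rw [nf_a_mul, ← a_mul_ofForm hred, hv]
        exact ⟨reduced_mulA hred, rfl⟩
      · change Reduced n (b n * smk n v).nf ∧ ofForm n (b n * smk n v).nf = b n * smk n v
        rw [nf_b_mul, ← b_mul_ofForm hred, hv]
        exact ⟨reduced_mulB hred, rfl⟩

lemma reduced_nf (x : Sn n) : Reduced n x.nf := (reduced_nf_and_ofForm_nf x).1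

lemma ofForm_nf (x : Sn n) : ofForm n x.nf = x := (reduced_nf_and_ofForm_nf x).2

lemma nf_injective : Function.Injective (nf (n := n)) :=
  Function.LeftInverse.injective ofForm_nf

lemma nf_mul (x y : Sn n) : (x * y).nf = lmul n x.nf y.nf := by
  rw [nf_mul_eq_act, ← act_ofForm (reduced_nf x), ofForm_nf]

lemma commute_iff_lmul {x y : Sn n} : Commute x y ↔ lmul n x.nf y.nf = lmul n y.nf x.nf := by
  rw [Commute, SemiconjBy, ← nf_injective.eq_iff, nf_mul, nf_mul]

lemma notMem_center_iff {x : Sn n} : x ∉ Set.center (Sn n) ↔ Noncentral n x.nf := by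
  rw [Semigroup.mem_center_iff]
  constructor
  · intro hx
    by_contra hnc
    exact hx fun g =>
      (commute_iff_lmul.2 (lmul_comm_of_not_noncentral (reduced_nf x) hnc (reduced_nf g))).eq.symm
  · intro hnc hx
    obtain ⟨f, hf, hne⟩ := hnc.exists_lmul_ne
    have hcomm := commute_iff_lmul.1 (hx (ofForm n f))
    rw [nf_ofForm hf] at hcomm
    exact hne hcomm.symm

lemma card_le_of_isClique {t : Finset {x : Sn n // x ∉ Set.center (Sn n)}}
    (ht : (CommutingGraph (Sn n)).IsClique (t : Set _)) : t.card ≤ 2 * n - 1 := by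
  have hnc (x : {x : Sn n // x ∉ Set.center (Sn n)}) : Noncentral n x.1.nf :=
    notMem_center_iff.1 x.2
  calc t.card ≤ (Finset.range (2 * n - 1)).card := by
        refine Finset.card_le_card_of_injOn (fun x => slot n x.1.nf)
          (fun x _ => Finset.mem_range.2 (hnc x).slot_lt) ?_
        intro x hx y hy hslot
        by_contra hne
        have hcomm := commute_iff_lmul.1 (CommutingGraph.isClique_iff.1 ht hx hy hne)
        exact hne (Subtype.ext (nf_injective
          (eq_of_lmul_comm_of_slot_eq (hnc x) (hnc y) hcomm hslot)))
    _ = 2 * n - 1 := Finset.card_range _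

def cliqueVertex (m : Fin (2 * n - 1)) : {x : Sn n // x ∉ Set.center (Sn n)} :=
  ⟨ofForm n (cliqueForm n m), notMem_center_iff.2 <| by
    rw [nf_ofForm (noncentral_cliqueForm m.2).reduced]
    exact noncentral_cliqueForm m.2⟩

lemma nf_cliqueVertex (m : Fin (2 * n - 1)) : (cliqueVertex m).1.nf = cliqueForm n m :=
  nf_ofForm (noncentral_cliqueForm m.2).reduced

lemma cliqueVertex_injective : Function.Injective (cliqueVertex (n := n)) := by
  intro m₁ m₂ h
  have := congrArg (fun x : {x : Sn n // x ∉ Set.center (Sn n)} => slot n x.1.nf) h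
  simp only [nf_cliqueVertex, slot_cliqueForm m₁.2, slot_cliqueForm m₂.2] at this
  exact Fin.ext this

lemma isNClique_cliqueVertex :
    (CommutingGraph (Sn n)).IsNClique (2 * n - 1)
      (Finset.univ.map ⟨cliqueVertex, cliqueVertex_injective⟩) := by
  refine ⟨CommutingGraph.isClique_iff.2 ?_, by simp⟩
  simp only [Finset.coe_map, Finset.coe_univ, Set.image_univ]
  rintro _ ⟨m₁, rfl⟩ _ ⟨m₂, rfl⟩ -
  rw [commute_iff_lmul]
  simp only [Function.Embedding.coeFn_mk, nf_cliqueVertex, lmul_cliqueForm]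

end Sn

theorem Sn_cliqueNum_general (n : ℕ) :
    (CommutingGraph (Sn n)).cliqueNum = 2 * n - 1 :=
  SimpleGraph.cliqueNum_eq_of_isNClique Sn.isNClique_cliqueVertex fun _ => Sn.card_le_of_isClique

theorem Sn_cliqueNum (n : ℕ) (hn : 1 ≤ n) :
    (CommutingGraph (Sn n)).cliqueNum = 2 * n - 1 :=
  Sn_cliqueNum_general n
end

section
/- For every natural number n ≥ 1, the clique number of the commuting graph of the null union Sₙ • S₁ equals 2n, and Sₙ • S₁ is generated by 4 elements. -/
/-- The free semigroup with zero on the two generators `a = of false`, `b = of true`. -/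
abbrev W2' := WithZero (FreeSemigroup Bool)

/-- The generator `a` of `S₁`. -/
def ga1 : FreeSemigroup Bool := FreeSemigroup.of false

/-- The generator `b` of `S₁`. -/
def gb1 : FreeSemigroup Bool := FreeSemigroup.of true

/-- The defining relations of `S₁`: `a² = b² = 0`, `aba = bab = 0`. -/
def S1Rel : W2' → W2' → Prop := fun p q =>
  (p = ((ga1 * ga1 : FreeSemigroup Bool) : W2') ∧ q = 0) ∨
  (p = ((gb1 * gb1 : FreeSemigroup Bool) : W2') ∧ q = 0) ∨
  (p = ((ga1 * gb1 * ga1 : FreeSemigroup Bool) : W2') ∧ q = 0) ∨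
  (p = ((gb1 * ga1 * gb1 : FreeSemigroup Bool) : W2') ∧ q = 0)

/-- The congruence generated by the relations of `S₁`. -/
def S1Con : Con W2' := conGen S1Rel

/-- The semigroup `S₁ = ⟨a, b | a² = b² = 0, aba = bab = 0⟩`. -/
def S1 : Type := S1Con.Quotient

instance : Semigroup S1 := Con.semigroup _

/-- The canonical projection onto `S₁`. -/
def s1mk : W2' → S1 := S1Con.toQuotient
/-- The null union `S • T` of two semigroups with zero: the zeros are
identified and all cross products are `0`.  It is realized as the
subsemigroup `{(s, t) | s = 0 ∨ t = 0}` of `S × T`, where a nonzero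
`s ∈ S` corresponds to `(s, 0)`, a nonzero `t ∈ T` to `(0, t)`, and the
common zero to `(0, 0)`. -/
def NullUnion (S T : Type*) [MulZeroClass S] [MulZeroClass T] : Type _ :=
  {p : S × T // p.1 = 0 ∨ p.2 = 0}

instance (S T : Type*) [MulZeroClass S] [MulZeroClass T] : Mul (NullUnion S T) :=
  ⟨fun x y => ⟨(x.1.1 * y.1.1, x.1.2 * y.1.2), by
    rcases x.2 with h | h
    · exact Or.inl (by rw [h, zero_mul])
    · exact Or.inr (by rw [h, zero_mul])⟩⟩

instance (S T : Type*) [MulZeroClass S] [MulZeroClass T] : Zero (NullUnion S T) :=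
  ⟨⟨(0, 0), Or.inl rfl⟩⟩

instance (S T : Type*) [SemigroupWithZero S] [SemigroupWithZero T] :
    Semigroup (NullUnion S T) where
  mul_assoc a b c := Subtype.ext (Prod.ext (mul_assoc _ _ _) (mul_assoc _ _ _))

instance (n : ℕ) : SemigroupWithZero (Sn n) :=
  { (inferInstance : Semigroup (Sn n)) with
    zero := smk n 0
    zero_mul := fun x => Con.induction_on x fun a => by
      show ((0 : W2) : (SnCon n).Quotient) * (a : (SnCon n).Quotient) =
        ((0 : W2) : (SnCon n).Quotient)
      rw [← Con.coe_mul, zero_mul]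
    mul_zero := fun x => Con.induction_on x fun a => by
      show (a : (SnCon n).Quotient) * ((0 : W2) : (SnCon n).Quotient) =
        ((0 : W2) : (SnCon n).Quotient)
      rw [← Con.coe_mul, mul_zero] }

instance : SemigroupWithZero S1 :=
  { (inferInstance : Semigroup S1) with
    zero := s1mk 0
    zero_mul := fun x => Con.induction_on x fun a => by
      show ((0 : W2') : S1Con.Quotient) * (a : S1Con.Quotient) =
        ((0 : W2') : S1Con.Quotient)
      rw [← Con.coe_mul, zero_mul]
    mul_zero := fun x => Con.induction_on x fun a => by
      show (a : S1Con.Quotient) * ((0 : W2') : S1Con.Quotient) =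
        ((0 : W2') : S1Con.Quotient)
      rw [← Con.coe_mul, mul_zero] }


/-!
`Sₙ` and `S₁` are presented by monomial relations `r = 0`, so each is the Rees quotient of the
free semigroup with zero by the ideal of words having a relator as a factor: two words are equal
in the quotient iff they coincide or both lie in that ideal. The nonzero elements of `Sₙ` are thus
`aⁱ` (`1 ≤ i ≤ n`) and `aᵖ b a^q` (`p q = 0`, `p + q ≤ n`), and those of `S₁` are `a, b, ab, ba`.

Cross products vanish in a null union, so the commuting graph of `S • T` is the join of those of
`S` and `T` and clique numbers add. In `Sₙ` the `2n - 1` elements `aᵖ b a^q` with `p q = 0`,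
`p + q < n` are non-central, and any product of two of them contains two `b`s, hence is `0`.
Conversely the non-central elements of `Sₙ` fall into `2n - 1` blocks, `{a^(n-c), b a^c}` for
`c < n` and `{aⁱ b}` for `1 ≤ i < n`, none of which contains two commuting elements. In `S₁` only
`a` and `b` are non-central, and they do not commute. Each factor is generated by its `a` and `b`.
-/

namespace FreeSemigroup

variable {α : Type*}

def toList (x : FreeSemigroup α) : List α := (toFreeMonoid x).toList

@[simp] lemma toList_mk (a : α) (l : List α) : toList ⟨a, l⟩ = a :: l := by
  simp [toList, toFreeMonoid_mk_eq_cons]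

@[simp] lemma toList_of (a : α) : toList (of a) = [a] := toList_mk a []

@[simp] lemma toList_mul (x y : FreeSemigroup α) : toList (x * y) = toList x ++ toList y := by
  simp [toList]

lemma toList_injective : Function.Injective (toList (α := α)) :=
  FreeMonoid.toList.injective.comp toFreeMonoid_injective

lemma toList_ne_nil (x : FreeSemigroup α) : toList x ≠ [] := by
  cases x; simp

lemma eq_or_eq_mul_of_toList_prefix {r x : FreeSemigroup α} (h : toList r <+: toList x) :
    x = r ∨ ∃ y, x = r * y := by
  obtain ⟨t, ht⟩ := h
  cases t with
  | nil => exact Or.inl (toList_injective (by simpa using ht.symm))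
  | cons b t => exact Or.inr ⟨⟨b, t⟩, toList_injective (by simpa using ht.symm)⟩

def HasFactorIn (R : Set (FreeSemigroup α)) (L : List α) : Prop :=
  ∃ r ∈ R, r.toList <:+: L

lemma HasFactorIn.mono {R : Set (FreeSemigroup α)} {L L' : List α} (h : HasFactorIn R L)
    (hL : L <:+: L') : HasFactorIn R L' :=
  let ⟨r, hr, hrL⟩ := h
  ⟨r, hr, hrL.trans hL⟩

end FreeSemigroup

section ReesQuotient

open FreeSemigroup

variable {α : Type*} (R : Set (FreeSemigroup α))

def monomialRel (p q : WithZero (FreeSemigroup α)) : Prop :=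
  (∃ r ∈ R, p = ↑r) ∧ q = 0

/-- Membership in the ideal `{0} ∪ {words with a factor in R}`. -/
def IsReesNull (w : WithZero (FreeSemigroup α)) : Prop :=
  ∀ x : FreeSemigroup α, w = ↑x → HasFactorIn R x.toList

variable {R}

@[simp] lemma isReesNull_zero : IsReesNull R 0 :=
  fun _ h => absurd h.symm WithZero.coe_ne_zero

@[simp] lemma isReesNull_coe {x : FreeSemigroup α} : IsReesNull R ↑x ↔ HasFactorIn R x.toList :=
  ⟨fun h => h x rfl, fun h _ hx => WithZero.coe_injective hx ▸ h⟩

lemma IsReesNull.mul_right {v : WithZero (FreeSemigroup α)} (hv : IsReesNull R v)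
    (w : WithZero (FreeSemigroup α)) : IsReesNull R (v * w) := by
  induction v using WithZero.recZeroCoe with
  | zero => simp
  | coe x =>
    induction w using WithZero.recZeroCoe with
    | zero => simp
    | coe y =>
      rw [← WithZero.coe_mul, isReesNull_coe, toList_mul]
      exact (isReesNull_coe.mp hv).mono (List.prefix_append _ _).isInfix

lemma IsReesNull.mul_left {v : WithZero (FreeSemigroup α)} (hv : IsReesNull R v)
    (w : WithZero (FreeSemigroup α)) : IsReesNull R (w * v) := by
  induction v using WithZero.recZeroCoe with
  | zero => simp
  | coe x =>
    induction w using WithZero.recZeroCoe with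
    | zero => simp
    | coe y =>
      rw [← WithZero.coe_mul, isReesNull_coe, toList_mul]
      exact (isReesNull_coe.mp hv).mono (List.suffix_append _ _).isInfix

variable (R) in
def reesCon : Con (WithZero (FreeSemigroup α)) where
  r v w := v = w ∨ IsReesNull R v ∧ IsReesNull R w
  iseqv := ⟨fun _ => Or.inl rfl, fun h => h.imp Eq.symm And.symm, fun h₁ h₂ => by grind⟩
  mul' := by
    rintro v v' w w' (rfl | ⟨hv, hv'⟩) (rfl | ⟨hw, hw'⟩)
    · exact Or.inl rfl
    · exact Or.inr ⟨hw.mul_left v, hw'.mul_left v⟩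
    · exact Or.inr ⟨hv.mul_right w, hv'.mul_right w⟩
    · exact Or.inr ⟨hv.mul_right w, hv'.mul_right w'⟩

lemma reesCon_apply {v w : WithZero (FreeSemigroup α)} :
    reesCon R v w ↔ v = w ∨ IsReesNull R v ∧ IsReesNull R w := Iff.rfl

lemma conGen_monomialRel_of_prefix {r x : FreeSemigroup α} (hr : r ∈ R)
    (h : r.toList <+: x.toList) : conGen (monomialRel R) ↑x 0 := by
  have hr0 : conGen (monomialRel R) ↑r 0 := ConGen.Rel.of _ _ ⟨⟨r, hr, rfl⟩, rfl⟩
  obtain rfl | ⟨y, rfl⟩ := eq_or_eq_mul_of_toList_prefix h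
  · exact hr0
  · simpa using (conGen (monomialRel R)).mul hr0 ((conGen _).refl (y : WithZero _))

lemma conGen_monomialRel_coe_zero {x : FreeSemigroup α} (hx : HasFactorIn R x.toList) :
    conGen (monomialRel R) ↑x 0 := by
  obtain ⟨r, hr, hrx⟩ := hx
  induction x using FreeSemigroup.recOnMul with
  | ih1 a =>
    rw [toList_of, List.infix_cons_iff, List.infix_nil] at hrx
    exact conGen_monomialRel_of_prefix hr (hrx.resolve_right r.toList_ne_nil)
  | ih2 a y _ ih =>
    rw [toList_mul, toList_of, List.singleton_append, List.infix_cons_iff] at hrx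
    rcases hrx with hrx | hrx
    · exact conGen_monomialRel_of_prefix hr (by simpa using hrx)
    · simpa using (conGen (monomialRel R)).mul ((conGen _).refl (of a : WithZero _)) (ih hrx)

theorem conGen_monomialRel : conGen (monomialRel R) = reesCon R := by
  refine le_antisymm (Con.conGen_le.mpr ?_) fun v w h => ?_
  · rintro p q ⟨⟨r, hr, rfl⟩, rfl⟩
    exact Or.inr ⟨isReesNull_coe.mpr ⟨r, hr, List.infix_refl _⟩, isReesNull_zero⟩
  · have hnull {v} (hv : IsReesNull R v) : conGen (monomialRel R) v 0 := by
      induction v using WithZero.recZeroCoe with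
      | zero => exact (conGen _).refl 0
      | coe x => exact conGen_monomialRel_coe_zero (isReesNull_coe.mp hv)
    rcases h with rfl | ⟨hv, hw⟩
    · exact (conGen _).refl v
    · exact (hnull hv).trans (hnull hw).symm

end ReesQuotient

namespace Con

open FreeSemigroup

variable {α : Type*} {R : Set (FreeSemigroup α)} {c : Con (WithZero (FreeSemigroup α))}

variable (c) in
def ofWord (x : FreeSemigroup α) : c.Quotient := ((x : WithZero (FreeSemigroup α)) : c.Quotient)

lemma ofWord_eq_ofWord_iff_of_eq_reesCon (hc : c = reesCon R) {x y : FreeSemigroup α} :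
    c.ofWord x = c.ofWord y ↔ x = y ∨ HasFactorIn R x.toList ∧ HasFactorIn R y.toList := by
  subst hc
  simp only [ofWord]
  rw [Con.eq, reesCon_apply, WithZero.coe_inj, isReesNull_coe, isReesNull_coe]

lemma ofWord_eq_zero_iff_of_eq_reesCon (hc : c = reesCon R) {x : FreeSemigroup α} :
    c.ofWord x = ((0 : WithZero (FreeSemigroup α)) : c.Quotient) ↔ HasFactorIn R x.toList := by
  subst hc
  simp only [ofWord]
  rw [Con.eq, reesCon_apply, isReesNull_coe]
  simp [WithZero.coe_ne_zero]

lemma eq_zero_or_eq_ofWord_of_eq_reesCon (hc : c = reesCon R) (y : c.Quotient) :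
    y = ((0 : WithZero (FreeSemigroup α)) : c.Quotient) ∨
      ∃ x : FreeSemigroup α, ¬ HasFactorIn R x.toList ∧ y = c.ofWord x := by
  induction y using Con.induction_on with
  | H w =>
    induction w using WithZero.recZeroCoe with
    | zero => exact Or.inl rfl
    | coe x =>
      by_cases hx : HasFactorIn R x.toList
      · exact Or.inl ((ofWord_eq_zero_iff_of_eq_reesCon hc).mpr hx)
      · exact Or.inr ⟨x, hx, rfl⟩

lemma ofWord_mul_eq_zero_of_eq_reesCon (hc : c = reesCon R) {x : FreeSemigroup α}
    (hx : ∀ a, HasFactorIn R (x.toList ++ [a]) ∧ HasFactorIn R (a :: x.toList)) (y : c.Quotient) :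
    c.ofWord x * y = ((0 : WithZero (FreeSemigroup α)) : c.Quotient) ∧
      y * c.ofWord x = ((0 : WithZero (FreeSemigroup α)) : c.Quotient) := by
  subst hc
  induction y using Con.induction_on with
  | H w =>
    simp only [ofWord, ← Con.coe_mul, Con.eq]
    suffices IsReesNull R (↑x * w) ∧ IsReesNull R (w * ↑x) from
      ⟨Or.inr ⟨this.1, isReesNull_zero⟩, Or.inr ⟨this.2, isReesNull_zero⟩⟩
    induction w using WithZero.recZeroCoe with
    | zero => simp
    | coe y =>
      induction y using FreeSemigroup.recOnMul with
      | ih1 a =>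
        rw [← WithZero.coe_mul, ← WithZero.coe_mul, isReesNull_coe, isReesNull_coe]
        simpa using hx a
      | ih2 a y ha hy =>
        rw [WithZero.coe_mul, ← mul_assoc]
        refine ⟨ha.1.mul_right _, ?_⟩
        rw [mul_assoc]
        exact hy.2.mul_left _

lemma closure_range_ofWord {r : FreeSemigroup α} (hr : c ↑r 0) :
    Subsemigroup.closure (Set.range fun a : α => c.ofWord (of a)) = ⊤ := by
  have hword (x : FreeSemigroup α) :
      c.ofWord x ∈ Subsemigroup.closure (Set.range fun a : α => c.ofWord (of a)) := by
    induction x using FreeSemigroup.recOnMul with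
    | ih1 a => exact Subsemigroup.subset_closure ⟨a, rfl⟩
    | ih2 a y ha hy => exact Subsemigroup.mul_mem _ ha hy
  refine eq_top_iff.mpr fun y _ => ?_
  induction y using Con.induction_on with
  | H w =>
    induction w using WithZero.recZeroCoe with
    | zero => exact (Con.eq c).mpr hr ▸ hword r
    | coe x => exact hword x

end Con

namespace CommutingGraph

open Finset

variable {S : Type*} [Semigroup S]

@[simp] lemma adj_iff {v w : {x : S // x ∉ Set.center S}} :
    (CommutingGraph S).Adj v w ↔ v ≠ w ∧ v.1 * w.1 = w.1 * v.1 := Iff.rfl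

lemma isNClique_subtype [DecidablePred (· ∉ Set.center S)] {t : Finset S}
    (ht : ∀ x ∈ t, x ∉ Set.center S) (hcomm : ∀ x ∈ t, ∀ y ∈ t, x * y = y * x) :
    (CommutingGraph S).IsNClique #t (t.subtype (· ∉ Set.center S)) := by
  refine ⟨fun v hv w hw hvw => ⟨hvw, hcomm _ (by simpa using hv) _ (by simpa using hw)⟩, ?_⟩
  rw [card_subtype, filter_true_of_mem ht]

lemma card_le_of_cover {m : ℕ} (B : ℕ → Set S) (hcover : ∀ x ∉ Set.center S, ∃ c < m, x ∈ B c)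
    (hB : ∀ c, ∀ x ∈ B c, ∀ y ∈ B c, x * y = y * x → x = y)
    {s : Finset {x : S // x ∉ Set.center S}} (hs : (CommutingGraph S).IsClique (s : Set _)) :
    #s ≤ m := by
  choose color hcolor hmem using fun v : {x : S // x ∉ Set.center S} => hcover v.1 v.2
  calc #s ≤ #(range m) := card_le_card_of_injOn (fun v => color v)
        (fun v _ => mem_range.mpr (hcolor v)) fun v hv w hw hvw => by
          by_contra hne
          have hw' : w.1 ∈ B (color v) := by rw [show color v = color w from hvw]; exact hmem w
          exact hne (Subtype.ext (hB _ _ (hmem v) _ hw' (hs hv hw hne).2))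
    _ = m := card_range m

end CommutingGraph

namespace NullUnion

open Finset

variable {S T : Type*} [SemigroupWithZero S] [SemigroupWithZero T]

def inl (s : S) : NullUnion S T := ⟨(s, 0), Or.inr rfl⟩

def inr (t : T) : NullUnion S T := ⟨(0, t), Or.inl rfl⟩

lemma ext {x y : NullUnion S T} (h₁ : x.1.1 = y.1.1) (h₂ : x.1.2 = y.1.2) : x = y :=
  Subtype.ext (Prod.ext h₁ h₂)

@[simp] lemma inl_mul_inl (s s' : S) : (inl s * inl s' : NullUnion S T) = inl (s * s') :=
  ext rfl (mul_zero 0)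

@[simp] lemma inr_mul_inr (t t' : T) : (inr t * inr t' : NullUnion S T) = inr (t * t') :=
  ext (mul_zero 0) rfl

@[simp] lemma inl_mul_inr (s : S) (t : T) : inl s * inr t = 0 := ext (mul_zero s) (zero_mul t)

@[simp] lemma inr_mul_inl (s : S) (t : T) : inr t * inl s = 0 := ext (zero_mul s) (mul_zero t)

lemma inl_injective : Function.Injective (inl : S → NullUnion S T) :=
  fun _ _ h => congrArg (fun x : NullUnion S T => x.1.1) h

lemma inr_injective : Function.Injective (inr : T → NullUnion S T) :=
  fun _ _ h => congrArg (fun x : NullUnion S T => x.1.2) h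

lemma inl_ne_inr {s : S} (hs : s ≠ 0) (t : T) : inl s ≠ inr t :=
  fun h => hs (congrArg (fun x : NullUnion S T => x.1.1) h)

lemma eq_inl_or_eq_inr (x : NullUnion S T) : (∃ s, x = inl s) ∨ ∃ t, x = inr t := by
  obtain ⟨⟨s, t⟩, h | h⟩ := x
  exacts [Or.inr ⟨t, ext h rfl⟩, Or.inl ⟨s, ext rfl h⟩]

lemma inl_mem_center_iff {s : S} : inl s ∈ Set.center (NullUnion S T) ↔ s ∈ Set.center S := by
  simp only [Semigroup.mem_center_iff]
  refine ⟨fun h g => inl_injective (by simpa using h (inl g)), fun h x => ?_⟩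
  obtain ⟨g, rfl⟩ | ⟨t, rfl⟩ := eq_inl_or_eq_inr x <;> simp [h]

lemma inr_mem_center_iff {t : T} : inr t ∈ Set.center (NullUnion S T) ↔ t ∈ Set.center T := by
  simp only [Semigroup.mem_center_iff]
  refine ⟨fun h g => inr_injective (by simpa using h (inr g)), fun h x => ?_⟩
  obtain ⟨s, rfl⟩ | ⟨g, rfl⟩ := eq_inl_or_eq_inr x <;> simp [h]

local notation "V(" M ")" => {x : M // x ∉ Set.center M}

variable (T) in
def inlVertex : V(S) ↪ V(NullUnion S T) :=
  ⟨fun v => ⟨inl v.1, inl_mem_center_iff.not.mpr v.2⟩,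
    fun _ _ h => Subtype.ext (inl_injective (congrArg Subtype.val h))⟩

variable (S) in
def inrVertex : V(T) ↪ V(NullUnion S T) :=
  ⟨fun v => ⟨inr v.1, inr_mem_center_iff.not.mpr v.2⟩,
    fun _ _ h => Subtype.ext (inr_injective (congrArg Subtype.val h))⟩

@[simp] lemma coe_inlVertex (v : V(S)) : (inlVertex T v : NullUnion S T) = inl v.1 := rfl

@[simp] lemma coe_inrVertex (v : V(T)) : (inrVertex S v : NullUnion S T) = inr v.1 := rfl

lemma adj_inlVertex_iff {v w : V(S)} :
    (CommutingGraph (NullUnion S T)).Adj (inlVertex T v) (inlVertex T w) ↔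
      (CommutingGraph S).Adj v w := by
  simp only [CommutingGraph.adj_iff, (inlVertex T).injective.ne_iff]
  exact and_congr_right fun _ => by simpa using (inl_injective (T := T)).eq_iff

lemma adj_inrVertex_iff {v w : V(T)} :
    (CommutingGraph (NullUnion S T)).Adj (inrVertex S v) (inrVertex S w) ↔
      (CommutingGraph T).Adj v w := by
  simp only [CommutingGraph.adj_iff, (inrVertex S).injective.ne_iff]
  exact and_congr_right fun _ => by simpa using (inr_injective (S := S)).eq_iff

lemma adj_inlVertex_inrVertex (v : V(S)) (w : V(T)) :
    (CommutingGraph (NullUnion S T)).Adj (inlVertex T v) (inrVertex S w) := by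
  refine ⟨fun h => inl_ne_inr ?_ w.1 (congrArg Subtype.val h), by simp⟩
  exact fun h0 => v.2 (h0 ▸ Set.zero_mem_center)

theorem isGreatest_cliqueSizes {p q : ℕ}
    (hS : IsGreatest {k | ∃ s, (CommutingGraph S).IsNClique k s} p)
    (hT : IsGreatest {k | ∃ t, (CommutingGraph T).IsNClique k t} q) :
    IsGreatest {k | ∃ u, (CommutingGraph (NullUnion S T)).IsNClique k u} (p + q) := by
  classical
  constructor
  · obtain ⟨s, hs⟩ := hS.1
    obtain ⟨t, ht⟩ := hT.1
    refine ⟨s.map (inlVertex T) ∪ t.map (inrVertex S), ⟨?_, ?_⟩⟩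
    · rw [coe_union, coe_map, coe_map, SimpleGraph.IsClique, Set.pairwise_union,
        (inlVertex T).injective.injOn.pairwise_image,
        (inrVertex S).injective.injOn.pairwise_image]
      refine ⟨fun v hv w hw hvw => adj_inlVertex_iff.mpr (hs.isClique hv hw hvw),
        fun v hv w hw hvw => adj_inrVertex_iff.mpr (ht.isClique hv hw hvw), ?_⟩
      rintro - ⟨v, -, rfl⟩ - ⟨w, -, rfl⟩ -
      exact ⟨adj_inlVertex_inrVertex v w, (adj_inlVertex_inrVertex v w).symm⟩
    · rw [card_union_of_disjoint, card_map, card_map, hs.card_eq, ht.card_eq]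
      simp only [disjoint_left, mem_map, not_exists, not_and]
      rintro - ⟨v, -, rfl⟩ w - hw
      exact (adj_inlVertex_inrVertex v w).ne hw.symm
  · rintro k ⟨u, hu⟩
    set s := u.preimage (inlVertex T) (inlVertex T).injective.injOn
    set t := u.preimage (inrVertex S) (inrVertex S).injective.injOn
    have hs : #s ≤ p := hS.2 ⟨s, ⟨fun v hv w hw hvw => adj_inlVertex_iff.mp
      (hu.isClique (mem_preimage.mp hv) (mem_preimage.mp hw) ((inlVertex T).injective.ne hvw)),
      rfl⟩⟩
    have ht : #t ≤ q := hT.2 ⟨t, ⟨fun v hv w hw hvw => adj_inrVertex_iff.mp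
      (hu.isClique (mem_preimage.mp hv) (mem_preimage.mp hw) ((inrVertex S).injective.ne hvw)),
      rfl⟩⟩
    have hsub : u ⊆ s.map (inlVertex T) ∪ t.map (inrVertex S) := by
      rintro ⟨x, hx⟩ hxu
      simp only [mem_union, mem_map]
      obtain ⟨a, rfl⟩ | ⟨b, rfl⟩ := eq_inl_or_eq_inr x
      · exact Or.inl ⟨⟨a, inl_mem_center_iff.not.mp hx⟩, mem_preimage.mpr hxu, rfl⟩
      · exact Or.inr ⟨⟨b, inr_mem_center_iff.not.mp hx⟩, mem_preimage.mpr hxu, rfl⟩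
    calc k = #u := hu.card_eq.symm
      _ ≤ #s + #t := (card_le_card hsub).trans ((card_union_le _ _).trans (by simp))
      _ ≤ p + q := add_le_add hs ht

lemma inl_mem_closure {A : Set S} {s : S} (hs : s ∈ Subsemigroup.closure A) :
    inl s ∈ Subsemigroup.closure (inl '' A : Set (NullUnion S T)) := by
  induction hs using Subsemigroup.closure_induction with
  | mem x hx => exact Subsemigroup.subset_closure ⟨x, hx, rfl⟩
  | mul x y _ _ hx hy => simpa using Subsemigroup.mul_mem _ hx hy

lemma inr_mem_closure {B : Set T} {t : T} (ht : t ∈ Subsemigroup.closure B) :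
    inr t ∈ Subsemigroup.closure (inr '' B : Set (NullUnion S T)) := by
  induction ht using Subsemigroup.closure_induction with
  | mem x hx => exact Subsemigroup.subset_closure ⟨x, hx, rfl⟩
  | mul x y _ _ hx hy => simpa using Subsemigroup.mul_mem _ hx hy

theorem exists_card_eq_closure_eq_top {A : Finset S} {B : Finset T}
    (hA : Subsemigroup.closure (A : Set S) = ⊤) (hB : Subsemigroup.closure (B : Set T) = ⊤)
    (hA0 : (0 : S) ∉ A) :
    ∃ gens : Finset (NullUnion S T), #gens = #A + #B ∧
      Subsemigroup.closure (gens : Set (NullUnion S T)) = ⊤ := by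
  classical
  refine ⟨A.map ⟨inl, inl_injective⟩ ∪ B.map ⟨inr, inr_injective⟩, ?_, ?_⟩
  · rw [card_union_of_disjoint, card_map, card_map]
    simp only [disjoint_left, mem_map, not_exists, not_and]
    rintro - ⟨s, hs, rfl⟩ t - h
    obtain rfl : s = 0 := (congrArg (fun x : NullUnion S T => x.1.1) h).symm
    exact hA0 hs
  · refine eq_top_iff.mpr fun x _ => ?_
    have hsub : (inl '' ↑A ∪ inr '' ↑B : Set (NullUnion S T)) ⊆
        ↑(A.map ⟨inl, inl_injective⟩ ∪ B.map ⟨inr, inr_injective⟩) := by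
      simp
    obtain ⟨s, rfl⟩ | ⟨t, rfl⟩ := eq_inl_or_eq_inr x
    · exact Subsemigroup.closure_mono (Set.subset_union_left.trans hsub)
        (inl_mem_closure (hA ▸ Subsemigroup.mem_top s))
    · exact Subsemigroup.closure_mono (Set.subset_union_right.trans hsub)
        (inr_mem_closure (hB ▸ Subsemigroup.mem_top t))

end NullUnion

namespace List

lemma replicate_append_cons_self {α : Type*} (k : ℕ) (a : α) (l : List α) :
    replicate k a ++ a :: l = a :: (replicate k a ++ l) := by
  rw [append_cons, ← replicate_succ', replicate_succ, cons_append]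

lemma replicate_append_cons_inj {α : Type*} {a b : α} (hab : a ≠ b) {p p' : ℕ}
    {l l' : List α} : replicate p a ++ b :: l = replicate p' a ++ b :: l' ↔ p = p' ∧ l = l' := by
  induction p generalizing p' with
  | zero => cases p' <;> simp [replicate_succ, Ne.symm hab]
  | succ p ih => cases p' <;> simp [replicate_succ, hab, ih]

end List

section SnWords

open List FreeSemigroup

lemma toList_fsPow_ga (k : ℕ) : (fsPow ga k).toList = replicate (k + 1) false := by
  induction k with
  | zero => rfl
  | succ k ih => rw [fsPow, toList_mul, ih, replicate_succ' (n := k + 1)]; rfl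

lemma toList_apow {i : ℕ} (hi : 1 ≤ i) : (apow i).toList = replicate i false := by
  rw [apow, toList_fsPow_ga, Nat.sub_add_cancel hi]

@[simp] lemma toList_ga : ga.toList = [false] := rfl

@[simp] lemma toList_gb : gb.toList = [true] := rfl

def abaPow : ℕ → ℕ → FreeSemigroup Bool
  | 0, q => ⟨true, replicate q false⟩
  | p + 1, q => ⟨false, replicate p false ++ true :: replicate q false⟩

@[simp] lemma toList_abaPow (p q : ℕ) :
    (abaPow p q).toList = replicate p false ++ true :: replicate q false := by
  cases p <;> simp [abaPow, replicate_succ]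

lemma abaPow_inj {p q p' q' : ℕ} : abaPow p q = abaPow p' q' ↔ p = p' ∧ q = q' := by
  rw [← toList_injective.eq_iff, toList_abaPow, toList_abaPow,
    replicate_append_cons_inj Bool.false_ne_true]
  simp

lemma abaPow_mul_apow (p q : ℕ) {i : ℕ} (hi : 1 ≤ i) : abaPow p q * apow i = abaPow p (q + i) :=
  toList_injective (by simp [toList_apow hi])

lemma apow_mul_abaPow (p q : ℕ) {i : ℕ} (hi : 1 ≤ i) : apow i * abaPow p q = abaPow (i + p) q :=
  toList_injective (by simp [toList_apow hi, ← append_assoc])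

def snRels (n : ℕ) : Set (FreeSemigroup Bool) :=
  {apow (n + 1), gb * gb, ga * gb * ga} ∪ {x | ∃ i, 1 ≤ i ∧ x = gb * apow i * gb}

lemma snRel_eq_monomialRel (n : ℕ) : SnRel n = monomialRel (snRels n) := by
  ext p q
  simp only [SnRel, monomialRel, snRels, Set.mem_union, Set.mem_insert_iff,
    Set.mem_singleton_iff, Set.mem_ofPred_eq]
  constructor
  · rintro (⟨rfl, rfl⟩ | ⟨rfl, rfl⟩ | ⟨rfl, rfl⟩ | ⟨i, hi, rfl, rfl⟩)
    · exact ⟨⟨_, Or.inl (Or.inl rfl), rfl⟩, rfl⟩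
    · exact ⟨⟨_, Or.inl (Or.inr (Or.inl rfl)), rfl⟩, rfl⟩
    · exact ⟨⟨_, Or.inl (Or.inr (Or.inr rfl)), rfl⟩, rfl⟩
    · exact ⟨⟨_, Or.inr ⟨i, hi, rfl⟩, rfl⟩, rfl⟩
  · rintro ⟨⟨r, (rfl | rfl | rfl) | ⟨i, hi, rfl⟩, rfl⟩, rfl⟩
    exacts [Or.inl ⟨rfl, rfl⟩, Or.inr (Or.inl ⟨rfl, rfl⟩), Or.inr (Or.inr (Or.inl ⟨rfl, rfl⟩)),
      Or.inr (Or.inr (Or.inr ⟨i, hi, rfl, rfl⟩))]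

lemma snCon_eq_reesCon (n : ℕ) : SnCon n = reesCon (snRels n) := by
  rw [SnCon, snRel_eq_monomialRel, conGen_monomialRel]

def SnNull (n : ℕ) (L : List Bool) : Prop :=
  replicate (n + 1) false <:+: L ∨ [true, true] <:+: L ∨ [false, true, false] <:+: L ∨
    ∃ i, 1 ≤ i ∧ true :: replicate i false ++ [true] <:+: L

variable {n : ℕ}

lemma hasFactorIn_snRels_iff {L : List Bool} : HasFactorIn (snRels n) L ↔ SnNull n L := by
  simp only [HasFactorIn, snRels, SnNull, Set.mem_union, Set.mem_insert_iff,
    Set.mem_singleton_iff, Set.mem_ofPred_eq]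
  constructor
  · rintro ⟨r, (rfl | rfl | rfl) | ⟨i, hi, rfl⟩, h⟩
    · exact Or.inl (by rwa [toList_apow (by omega)] at h)
    · exact Or.inr (Or.inl h)
    · exact Or.inr (Or.inr (Or.inl h))
    · exact Or.inr (Or.inr (Or.inr ⟨i, hi, by simpa [toList_apow hi] using h⟩))
  · rintro (h | h | h | ⟨i, hi, h⟩)
    · exact ⟨_, Or.inl (Or.inl rfl), by rwa [toList_apow (by omega)]⟩
    · exact ⟨_, Or.inl (Or.inr (Or.inl rfl)), h⟩
    · exact ⟨_, Or.inl (Or.inr (Or.inr rfl)), h⟩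
    · exact ⟨_, Or.inr ⟨i, hi, rfl⟩, by simpa [toList_apow hi] using h⟩

lemma SnNull.mono {L L' : List Bool} (h : SnNull n L) (hL : L <:+: L') : SnNull n L' :=
  hasFactorIn_snRels_iff.mp ((hasFactorIn_snRels_iff.mpr h).mono hL)

lemma snNull_replicate : SnNull n (replicate (n + 1) false) := Or.inl (infix_refl _)

lemma snNull_two_b (s t : List Bool) (i : ℕ) :
    SnNull n (s ++ true :: replicate i false ++ true :: t) := by
  rcases Nat.eq_zero_or_pos i with rfl | hi
  · exact Or.inr (Or.inl ⟨s, t, by simp⟩)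
  · exact Or.inr (Or.inr (Or.inr ⟨i, hi, s, t, by simp⟩))

lemma snNull_abaPow_mul_abaPow (p q p' q' : ℕ) : SnNull n (abaPow p q * abaPow p' q').toList := by
  convert snNull_two_b (n := n) (replicate p false) (replicate q' false) (q + p') using 1
  simp only [toList_mul, toList_abaPow, replicate_add, append_assoc, cons_append]

lemma snNull_concat_and_cons_abaPow {p q : ℕ} (h : p + q = n) (c : Bool) :
    SnNull n ((abaPow p q).toList ++ [c]) ∧ SnNull n (c :: (abaPow p q).toList) := by
  cases c
  · constructor
    · rcases Nat.eq_zero_or_pos p with rfl | hp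
      · exact snNull_replicate.mono ⟨[true], [], by simp [← h, replicate_succ']⟩
      · obtain ⟨k, rfl⟩ : ∃ k, p = k + 1 := ⟨p - 1, by omega⟩
        exact Or.inr (Or.inr (Or.inl ⟨replicate k false, replicate q false, by
          simp [replicate_succ, replicate_append_cons_self]⟩))
    · rcases Nat.eq_zero_or_pos q with rfl | hq
      · exact snNull_replicate.mono ⟨[], [true], by simp [← h, replicate_succ]⟩
      · obtain ⟨k, rfl⟩ : ∃ k, q = k + 1 := ⟨q - 1, by omega⟩
        exact Or.inr (Or.inr (Or.inl ⟨replicate p false, replicate k false, by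
          simp [replicate_succ, replicate_append_cons_self]⟩))
  · exact ⟨by simpa using snNull_two_b (n := n) (replicate p false) [] q,
      by simpa using snNull_two_b (n := n) [] (replicate q false) p⟩

lemma not_snNull_of_count {L : List Bool} (hfalse : L.count false ≤ n)
    (htrue : L.count true ≤ 1) (haba : ¬ [false, true, false] <+ L) : ¬ SnNull n L := by
  rintro (h | h | h | ⟨i, -, h⟩)
  · simpa using (h.sublist.count_le false).trans hfalse
  · simpa using (h.sublist.count_le true).trans htrue
  · exact haba h.sublist
  · simpa using (h.sublist.count_le true).trans htrue

lemma not_snNull_apow {i : ℕ} (hi : 1 ≤ i) (hin : i ≤ n) : ¬ SnNull n (apow i).toList := by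
  rw [toList_apow hi]
  refine not_snNull_of_count (by simpa using hin) (by simp [count_replicate]) ?_
  simp [sublist_replicate_iff, eq_replicate_iff]

lemma not_snNull_abaPow {p q : ℕ} (hpq : p * q = 0) (hn : p + q ≤ n) :
    ¬ SnNull n (abaPow p q).toList := by
  refine not_snNull_of_count (by simpa [count_replicate] using hn) (by simp [count_replicate]) ?_
  rcases Nat.mul_eq_zero.mp hpq with rfl | rfl
  · simp [sublist_cons_iff, sublist_replicate_iff, eq_replicate_iff]
  · intro h
    simpa [sublist_cons_iff, sublist_replicate_iff, eq_replicate_iff] using h.reverse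

lemma snNull_or_normal (hn : 1 ≤ n) (L : List Bool) (hL : L ≠ []) :
    SnNull n L ∨ (∃ i, 1 ≤ i ∧ i ≤ n ∧ L = replicate i false) ∨
      ∃ p q, p * q = 0 ∧ p + q ≤ n ∧ L = replicate p false ++ true :: replicate q false := by
  induction L with
  | nil => exact absurd rfl hL
  | cons c L ih =>
    rcases eq_or_ne L [] with rfl | hL'
    · cases c
      · exact Or.inr (Or.inl ⟨1, le_rfl, hn, rfl⟩)
      · exact Or.inr (Or.inr ⟨0, 0, rfl, Nat.zero_le n, rfl⟩)
    rcases ih hL' with h | ⟨i, hi, hin, rfl⟩ | ⟨p, q, hpq, hpqn, rfl⟩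
    · exact Or.inl (h.mono (suffix_cons c L).isInfix)
    · cases c
      · rcases hin.lt_or_eq with hin | rfl
        · exact Or.inr (Or.inl ⟨i + 1, by omega, hin, rfl⟩)
        · exact Or.inl snNull_replicate
      · exact Or.inr (Or.inr ⟨0, i, Nat.zero_mul i, by omega, rfl⟩)
    · cases c
      · rcases Nat.eq_zero_or_pos q with rfl | hq
        · rcases (show p ≤ n by omega).lt_or_eq with hpn | rfl
          · exact Or.inr (Or.inr ⟨p + 1, 0, rfl, by omega, rfl⟩)
          · exact Or.inl (snNull_replicate.mono ⟨[], [true], by simp [replicate_succ]⟩)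
        · obtain rfl : p = 0 := by simpa [hq.ne'] using hpq
          obtain ⟨k, rfl⟩ : ∃ k, q = k + 1 := ⟨q - 1, by omega⟩
          exact Or.inl (Or.inr (Or.inr (Or.inl ⟨[], replicate k false, rfl⟩)))
      · exact Or.inl (by simpa using snNull_two_b (n := n) [] (replicate q false) p)

end SnWords

namespace Sn

open FreeSemigroup Finset

variable {n : ℕ}

def ofWord (n : ℕ) (x : FreeSemigroup Bool) : Sn n := (SnCon n).ofWord x

lemma ofWord_mul (x y : FreeSemigroup Bool) : ofWord n (x * y) = ofWord n x * ofWord n y := rfl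

lemma ofWord_eq_ofWord_iff {x y : FreeSemigroup Bool} :
    ofWord n x = ofWord n y ↔ x = y ∨ SnNull n x.toList ∧ SnNull n y.toList := by
  have h := Con.ofWord_eq_ofWord_iff_of_eq_reesCon (snCon_eq_reesCon n) (x := x) (y := y)
  simp only [hasFactorIn_snRels_iff] at h
  exact h

lemma ofWord_eq_zero_iff {x : FreeSemigroup Bool} : ofWord n x = 0 ↔ SnNull n x.toList := by
  have h := Con.ofWord_eq_zero_iff_of_eq_reesCon (snCon_eq_reesCon n) (x := x)
  simp only [hasFactorIn_snRels_iff] at h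
  exact h

lemma ofWord_ne_ofWord {x y : FreeSemigroup Bool} (hxy : x ≠ y) (hy : ¬ SnNull n y.toList) :
    ofWord n x ≠ ofWord n y := by
  rw [Ne, ofWord_eq_ofWord_iff]
  tauto

lemma ofWord_mem_center {x : FreeSemigroup Bool}
    (hx : ∀ c, SnNull n (x.toList ++ [c]) ∧ SnNull n (c :: x.toList)) :
    ofWord n x ∈ Set.center (Sn n) := by
  have h := Con.ofWord_mul_eq_zero_of_eq_reesCon (snCon_eq_reesCon n) (x := x)
    (fun c => by simpa only [hasFactorIn_snRels_iff] using hx c)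
  exact Semigroup.mem_center_iff.mpr fun y => (h y).2.trans (h y).1.symm

lemma eq_zero_or_eq_ofWord (hn : 1 ≤ n) (s : Sn n) :
    s = 0 ∨ (∃ i, 1 ≤ i ∧ i ≤ n ∧ s = ofWord n (apow i)) ∨
      ∃ p q, p * q = 0 ∧ p + q ≤ n ∧ s = ofWord n (abaPow p q) := by
  rcases Con.eq_zero_or_eq_ofWord_of_eq_reesCon (snCon_eq_reesCon n) s with h | ⟨x, hx, rfl⟩
  · exact Or.inl h
  rw [hasFactorIn_snRels_iff] at hx
  rcases snNull_or_normal hn x.toList x.toList_ne_nil with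
    h | ⟨i, hi, hin, h⟩ | ⟨p, q, hpq, hpqn, h⟩
  · exact absurd h hx
  · rw [← toList_apow hi] at h
    exact Or.inr (Or.inl ⟨i, hi, hin, congrArg (ofWord n) (toList_injective h)⟩)
  · rw [← toList_abaPow] at h
    exact Or.inr (Or.inr ⟨p, q, hpq, hpqn, congrArg (ofWord n) (toList_injective h)⟩)

lemma abaPow_mem_center {p q : ℕ} (h : p + q = n) : ofWord n (abaPow p q) ∈ Set.center (Sn n) :=
  ofWord_mem_center (snNull_concat_and_cons_abaPow h)

lemma eq_and_eq_of_ofWord_abaPow_eq {p q p' q' : ℕ} (hpq : p * q = 0) (hn : p + q ≤ n)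
    (h : ofWord n (abaPow p q) = ofWord n (abaPow p' q')) : p = p' ∧ q = q' := by
  rw [ofWord_eq_ofWord_iff, abaPow_inj] at h
  exact h.resolve_right fun h => not_snNull_abaPow hpq hn h.1

lemma ofWord_abaPow_not_mem_center {p q : ℕ} (hpq : p * q = 0) (hn : p + q < n) :
    ofWord n (abaPow p q) ∉ Set.center (Sn n) := by
  rw [Semigroup.mem_center_iff]
  intro h
  have h' := h (ofWord n (apow 1))
  rw [← ofWord_mul, ← ofWord_mul, abaPow_mul_apow _ _ le_rfl, apow_mul_abaPow _ _ le_rfl] at h'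
  rcases Nat.mul_eq_zero.mp hpq with rfl | rfl
  · exact absurd (eq_and_eq_of_ofWord_abaPow_eq (by simp) (by omega) h'.symm).1 (by omega)
  · exact absurd (eq_and_eq_of_ofWord_abaPow_eq (by simp) (by omega) h').2 (by omega)

lemma ofWord_abaPow_mul_comm (p q p' q' : ℕ) :
    ofWord n (abaPow p q) * ofWord n (abaPow p' q') =
      ofWord n (abaPow p' q') * ofWord n (abaPow p q) := by
  rw [← ofWord_mul, ← ofWord_mul, ofWord_eq_ofWord_iff]
  exact Or.inr ⟨snNull_abaPow_mul_abaPow .., snNull_abaPow_mul_abaPow ..⟩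

def block (n c : ℕ) : Set (Sn n) :=
  if c < n then {ofWord n (apow (n - c)), ofWord n (abaPow 0 c)}
  else {ofWord n (abaPow (c + 1 - n) 0)}

lemma exists_mem_block (hn : 1 ≤ n) (s : Sn n) (hs : s ∉ Set.center (Sn n)) :
    ∃ c < 2 * n - 1, s ∈ block n c := by
  rcases eq_zero_or_eq_ofWord hn s with rfl | ⟨i, hi, hin, rfl⟩ | ⟨p, q, hpq, hpqn, rfl⟩
  · exact absurd Set.zero_mem_center hs
  · refine ⟨n - i, by omega, ?_⟩
    rw [block, if_pos (by omega), Nat.sub_sub_self hin]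
    exact Or.inl rfl
  rcases hpqn.lt_or_eq with hlt | heq
  swap
  · exact absurd (abaPow_mem_center heq) hs
  rcases Nat.eq_zero_or_pos p with rfl | hp
  · refine ⟨q, by omega, ?_⟩
    rw [block, if_pos (by omega)]
    exact Or.inr rfl
  · obtain rfl : q = 0 := by simpa [hp.ne'] using hpq
    refine ⟨n - 1 + p, by omega, ?_⟩
    rw [block, if_neg (by omega), show n - 1 + p + 1 - n = p by omega]
    rfl

lemma eq_of_mem_block_of_mul_comm {c : ℕ} {x y : Sn n} (hx : x ∈ block n c) (hy : y ∈ block n c)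
    (h : x * y = y * x) : x = y := by
  unfold block at hx hy
  split_ifs at hx hy with hc
  · have key : ofWord n (apow (n - c)) * ofWord n (abaPow 0 c) ≠
        ofWord n (abaPow 0 c) * ofWord n (apow (n - c)) := by
      rw [← ofWord_mul, ← ofWord_mul, apow_mul_abaPow _ _ (by omega),
        abaPow_mul_apow _ _ (by omega)]
      exact ofWord_ne_ofWord (by rw [Ne, abaPow_inj]; omega)
        (not_snNull_abaPow (by simp) (by omega))
    rcases hx with rfl | rfl <;> rcases hy with rfl | rfl
    exacts [rfl, absurd h key, absurd h.symm key, rfl]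
  · exact hx.trans hy.symm

theorem isGreatest_cliqueSizes (hn : 1 ≤ n) :
    IsGreatest {k | ∃ s, (CommutingGraph (Sn n)).IsNClique k s} (2 * n - 1) := by
  classical
  refine ⟨?_, ?_⟩
  · set t := (range n).image (fun q => ofWord n (abaPow 0 q)) ∪
      (Ico 1 n).image (fun p => ofWord n (abaPow p 0))
    have ht : ∀ x ∈ t, ∃ p q, p * q = 0 ∧ p + q < n ∧ x = ofWord n (abaPow p q) := by
      simp only [t, mem_union, mem_image, mem_range, mem_Ico]
      rintro x (⟨q, hq, rfl⟩ | ⟨p, hp, rfl⟩)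
      exacts [⟨0, q, by simp, by omega, rfl⟩, ⟨p, 0, by simp, by omega, rfl⟩]
    have hcard : #t = 2 * n - 1 := by
      rw [card_union_of_disjoint, card_image_of_injOn, card_image_of_injOn, card_range,
        Nat.card_Ico]
      · omega
      · exact fun p hp p' _ h =>
          (eq_and_eq_of_ofWord_abaPow_eq (by simp) (by simp at hp; omega) h).1
      · exact fun q hq q' _ h =>
          (eq_and_eq_of_ofWord_abaPow_eq (by simp) (by simp at hq; omega) h).2
      · simp only [disjoint_left, mem_image, mem_range, mem_Ico, not_exists, not_and]
        rintro - ⟨q, hq, rfl⟩ p hp h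
        have := (eq_and_eq_of_ofWord_abaPow_eq (by simp) (by omega) h).1
        omega
    refine ⟨_, hcard ▸ CommutingGraph.isNClique_subtype (fun x hx => ?_) fun x hx y hy => ?_⟩
    · obtain ⟨p, q, hpq, h, rfl⟩ := ht x hx
      exact ofWord_abaPow_not_mem_center hpq h
    · obtain ⟨p, q, -, -, rfl⟩ := ht x hx
      obtain ⟨p', q', -, -, rfl⟩ := ht y hy
      exact ofWord_abaPow_mul_comm p q p' q'
  · rintro k ⟨s, hs⟩
    rw [← hs.card_eq]
    exact CommutingGraph.card_le_of_cover (block n) (exists_mem_block hn)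
      (fun _ _ hx _ hy => eq_of_mem_block_of_mul_comm hx hy) hs.isClique

theorem exists_generators (hn : 1 ≤ n) :
    ∃ A : Finset (Sn n), #A = 2 ∧ (0 : Sn n) ∉ A ∧ Subsemigroup.closure (A : Set (Sn n)) = ⊤ := by
  classical
  have ha : ¬ SnNull n (apow 1).toList := not_snNull_apow le_rfl hn
  have hb : ¬ SnNull n (abaPow 0 0).toList := not_snNull_abaPow rfl (Nat.zero_le n)
  refine ⟨{ofWord n (apow 1), ofWord n (abaPow 0 0)},
    card_pair (ofWord_ne_ofWord (by decide) hb), ?_, ?_⟩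
  · simp only [mem_insert, mem_singleton, not_or, eq_comm (a := (0 : Sn n)), ofWord_eq_zero_iff]
    exact ⟨ha, hb⟩
  · have h := Con.closure_range_ofWord (c := SnCon n) (r := gb * gb)
      (ConGen.Rel.of _ _ (Or.inr (Or.inl ⟨rfl, rfl⟩)))
    rw [Bool.range_eq] at h
    rw [coe_pair]
    exact h

end Sn

section S1Words

open List FreeSemigroup

def s1Rels : Set (FreeSemigroup Bool) :=
  {ga1 * ga1, gb1 * gb1, ga1 * gb1 * ga1, gb1 * ga1 * gb1}

lemma s1Rel_eq_monomialRel : S1Rel = monomialRel s1Rels := by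
  ext p q
  simp only [S1Rel, monomialRel, s1Rels, Set.mem_insert_iff, Set.mem_singleton_iff]
  constructor
  · rintro (⟨rfl, rfl⟩ | ⟨rfl, rfl⟩ | ⟨rfl, rfl⟩ | ⟨rfl, rfl⟩) <;> simp
  · rintro ⟨⟨r, rfl | rfl | rfl | rfl, rfl⟩, rfl⟩ <;> simp

lemma s1Con_eq_reesCon : S1Con = reesCon s1Rels := by
  rw [S1Con, s1Rel_eq_monomialRel, conGen_monomialRel]

lemma hasFactorIn_s1Rels_iff {L : List Bool} :
    HasFactorIn s1Rels L ↔ [false, false] <:+: L ∨ [true, true] <:+: L ∨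
      [false, true, false] <:+: L ∨ [true, false, true] <:+: L := by
  simp [HasFactorIn, s1Rels, ga1, gb1]

lemma hasFactorIn_s1Rels_or_eq (L : List Bool) (hL : L ≠ []) :
    HasFactorIn s1Rels L ∨ L = [false] ∨ L = [true] ∨ L = [false, true] ∨ L = [true, false] := by
  match L, hL with
  | [c], _ => cases c <;> simp
  | [c, d], _ => rw [hasFactorIn_s1Rels_iff]; cases c <;> cases d <;> decide
  | c :: d :: e :: L, _ =>
    have h3 : HasFactorIn s1Rels [c, d, e] := by
      rw [hasFactorIn_s1Rels_iff]; cases c <;> cases d <;> cases e <;> decide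
    exact Or.inl (h3.mono (prefix_append [c, d, e] L).isInfix)

lemma hasFactorIn_s1Rels_of_three_le_length {L : List Bool} (hL : 3 ≤ L.length) :
    HasFactorIn s1Rels L := by
  refine (hasFactorIn_s1Rels_or_eq L (ne_nil_of_length_pos (by omega))).resolve_right ?_
  rintro (rfl | rfl | rfl | rfl) <;> simp at hL

end S1Words

namespace S1

open FreeSemigroup Finset

def ofWord (x : FreeSemigroup Bool) : S1 := S1Con.ofWord x

lemma ofWord_mul (x y : FreeSemigroup Bool) : ofWord (x * y) = ofWord x * ofWord y := rfl

lemma ofWord_eq_ofWord_iff {x y : FreeSemigroup Bool} :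
    ofWord x = ofWord y ↔ x = y ∨ HasFactorIn s1Rels x.toList ∧ HasFactorIn s1Rels y.toList :=
  Con.ofWord_eq_ofWord_iff_of_eq_reesCon s1Con_eq_reesCon

lemma ofWord_ab_ne_ofWord_ba : ofWord (ga1 * gb1) ≠ ofWord (gb1 * ga1) := by
  rw [Ne, ofWord_eq_ofWord_iff, ← toList_injective.eq_iff]
  simp only [hasFactorIn_s1Rels_iff, ga1, gb1, toList_mul, toList_of]
  decide

lemma ofWord_ga1_not_mem_center : ofWord ga1 ∉ Set.center S1 := fun h =>
  ofWord_ab_ne_ofWord_ba (Semigroup.mem_center_iff.mp h (ofWord gb1)).symm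

lemma ofWord_gb1_not_mem_center : ofWord gb1 ∉ Set.center S1 := fun h =>
  ofWord_ab_ne_ofWord_ba (Semigroup.mem_center_iff.mp h (ofWord ga1))

lemma mem_pair_of_not_mem_center (s : S1) (hs : s ∉ Set.center S1) :
    s ∈ ({ofWord ga1, ofWord gb1} : Set S1) := by
  rcases Con.eq_zero_or_eq_ofWord_of_eq_reesCon s1Con_eq_reesCon s with rfl | ⟨x, hx, rfl⟩
  · exact absurd Set.zero_mem_center hs
  have hcenter (hx : x.toList.length = 2) : ofWord x ∈ Set.center S1 := by
    have h := Con.ofWord_mul_eq_zero_of_eq_reesCon s1Con_eq_reesCon (x := x) fun c =>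
      ⟨hasFactorIn_s1Rels_of_three_le_length (by simp [hx]),
        hasFactorIn_s1Rels_of_three_le_length (by simp [hx])⟩
    exact Semigroup.mem_center_iff.mpr fun y => (h y).2.trans (h y).1.symm
  rcases (hasFactorIn_s1Rels_or_eq x.toList x.toList_ne_nil).resolve_left hx with h | h | h | h
  · exact Or.inl (congrArg ofWord (toList_injective h))
  · exact Or.inr (congrArg ofWord (toList_injective h))
  · exact absurd (hcenter (by simp [h])) hs
  · exact absurd (hcenter (by simp [h])) hs

theorem isGreatest_cliqueSizes : IsGreatest {k | ∃ s, (CommutingGraph S1).IsNClique k s} 1 := by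
  classical
  refine ⟨⟨_, CommutingGraph.isNClique_subtype (t := {ofWord ga1})
    (by simpa using ofWord_ga1_not_mem_center) (by simp)⟩, ?_⟩
  rintro k ⟨s, hs⟩
  rw [← hs.card_eq]
  refine CommutingGraph.card_le_of_cover (fun _ => {ofWord ga1, ofWord gb1})
    (fun x hx => ⟨0, one_pos, mem_pair_of_not_mem_center x hx⟩) ?_ hs.isClique
  rintro - x (rfl | rfl) y (rfl | rfl) h
  exacts [rfl, absurd h ofWord_ab_ne_ofWord_ba, absurd h.symm ofWord_ab_ne_ofWord_ba, rfl]

theorem exists_generators :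
    ∃ A : Finset S1, #A = 2 ∧ (0 : S1) ∉ A ∧ Subsemigroup.closure (A : Set S1) = ⊤ := by
  classical
  refine ⟨{ofWord ga1, ofWord gb1}, card_pair ?_, ?_, ?_⟩
  · exact fun h => ofWord_ab_ne_ofWord_ba (by rw [ofWord_mul, ofWord_mul, h])
  · simp only [mem_insert, mem_singleton, not_or]
    exact ⟨fun h => ofWord_ga1_not_mem_center (h ▸ Set.zero_mem_center),
      fun h => ofWord_gb1_not_mem_center (h ▸ Set.zero_mem_center)⟩
  · have h := Con.closure_range_ofWord (c := S1Con) (r := ga1 * ga1)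
      (ConGen.Rel.of _ _ (Or.inl ⟨rfl, rfl⟩))
    rw [Bool.range_eq] at h
    rw [coe_pair]
    exact h

end S1

theorem nullUnion_Sn_S1_cliqueNum_and_rank (n : ℕ) (hn : 1 ≤ n) :
    (CommutingGraph (NullUnion (Sn n) S1)).cliqueNum = 2 * n ∧
    ∃ gens : Finset (NullUnion (Sn n) S1),
      gens.card = 4 ∧
      Subsemigroup.closure (gens : Set (NullUnion (Sn n) S1)) = ⊤ := by
  constructor
  · rw [SimpleGraph.cliqueNum, (NullUnion.isGreatest_cliqueSizes
      (Sn.isGreatest_cliqueSizes hn) S1.isGreatest_cliqueSizes).csSup_eq]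
    omega
  · obtain ⟨A, hA, hA0, hAgen⟩ := Sn.exists_generators hn
    obtain ⟨B, hB, -, hBgen⟩ := S1.exists_generators
    obtain ⟨gens, hcard, hgen⟩ := NullUnion.exists_card_eq_closure_eq_top hAgen hBgen hA0
    exact ⟨gens, by rw [hcard, hA, hB], hgen⟩
end

section
/- The semigroup S = ⟨x₁, x₂, x₃, x₄ | xᵢxⱼxₖ = 0; x₁² = x₄x₁; x₄² = x₁x₄; x₁x₂ = x₄x₂ = x₁x₃ = x₄x₃ = x₂x₁ = x₂x₃ = x₃x₂ = x₃x₄ = 0⟩ has knit degree exactly 3; in particular, none of x₁ − x₂, x₂ − x₃, x₃ − x₄, x₁ − x₂ − x₃, x₂ − x₃ − x₄ is a left path. -/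
/-- The free semigroup with zero on the four generators `x₁, x₂, x₃, x₄`. -/
abbrev W4 := WithZero (FreeSemigroup (Fin 4))

/-- The generator `xᵢ` (indexed from `0`, so `xv 0 = x₁`, …, `xv 3 = x₄`). -/
def xv (i : Fin 4) : FreeSemigroup (Fin 4) := FreeSemigroup.of i

/-- The defining relations: `xᵢxⱼxₖ = 0` for all `i,j,k`; `x₁² = x₄x₁`;
`x₄² = x₁x₄`; `x₁x₂ = x₄x₂ = x₁x₃ = x₄x₃ = x₂x₁ = x₂x₃ = x₃x₂ = x₃x₄ = 0`. -/
def KnitRel : W4 → W4 → Prop := fun p q =>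
  (∃ i j k : Fin 4, p = ((xv i * xv j * xv k : FreeSemigroup (Fin 4)) : W4) ∧ q = 0) ∨
  (p = ((xv 0 * xv 0 : FreeSemigroup (Fin 4)) : W4) ∧
    q = ((xv 3 * xv 0 : FreeSemigroup (Fin 4)) : W4)) ∨
  (p = ((xv 3 * xv 3 : FreeSemigroup (Fin 4)) : W4) ∧
    q = ((xv 0 * xv 3 : FreeSemigroup (Fin 4)) : W4)) ∨
  (q = 0 ∧
    (p = ((xv 0 * xv 1 : FreeSemigroup (Fin 4)) : W4) ∨
     p = ((xv 3 * xv 1 : FreeSemigroup (Fin 4)) : W4) ∨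
     p = ((xv 0 * xv 2 : FreeSemigroup (Fin 4)) : W4) ∨
     p = ((xv 3 * xv 2 : FreeSemigroup (Fin 4)) : W4) ∨
     p = ((xv 1 * xv 0 : FreeSemigroup (Fin 4)) : W4) ∨
     p = ((xv 1 * xv 2 : FreeSemigroup (Fin 4)) : W4) ∨
     p = ((xv 2 * xv 1 : FreeSemigroup (Fin 4)) : W4) ∨
     p = ((xv 2 * xv 3 : FreeSemigroup (Fin 4)) : W4)))

/-- The congruence generated by the knit relations. -/
def KnitCon : Con W4 := conGen KnitRel

/-- The knit-degree-3 example semigroup. -/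
def KnitS : Type := KnitCon.Quotient

instance : Semigroup KnitS := Con.semigroup _

/-- The image of the generator `xᵢ` in the semigroup (`e 0 = x₁`, …, `e 3 = x₄`). -/
def e (i : Fin 4) : KnitS := ((xv i : W4) : KnitCon.Quotient)

/-- `a : Fin (m+1) → S` is a left path of length `m`: consecutive entries are
distinct and commute, no entry is central, `a 0 ≠ a m`, and
`a 0 * a i = a m * a i` for all `i`. -/
def IsLeftPath (S : Type*) [Semigroup S] (m : ℕ) (a : Fin (m + 1) → S) : Prop :=
  1 ≤ m ∧
  (∀ i, a i ∉ Set.center S) ∧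
  (∀ i : Fin m, a i.castSucc ≠ a i.succ ∧
    a i.castSucc * a i.succ = a i.succ * a i.castSucc) ∧
  a 0 ≠ a (Fin.last m) ∧
  (∀ i, a 0 * a i = a (Fin.last m) * a i)

open FreeSemigroup

namespace WithZero

variable {α β : Type*} [Mul α] [MulZeroClass β]

def liftMulHom (f : α →ₙ* β) : WithZero α →ₙ* β where
  toFun := WithZero.recZeroCoe 0 f
  map_mul' x y := by
    cases x <;> cases y <;> simp [recZeroCoe, ← WithZero.coe_mul]

@[simp]
theorem liftMulHom_coe (f : α →ₙ* β) (x : α) : liftMulHom f x = f x := rfl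

@[simp]
theorem liftMulHom_zero (f : α →ₙ* β) : liftMulHom f 0 = 0 := rfl

end WithZero

namespace Con

variable {M P : Type*} [Mul M] [Mul P]

def liftMulHom (c : Con M) (f : M →ₙ* P) (H : c ≤ Con.ker f) : c.Quotient →ₙ* P where
  toFun q := Con.liftOn q f fun _ _ h => H h
  map_mul' x y := Con.induction_on₂ x y fun x y => map_mul f x y

end Con

section TripleProductsZero

variable {α : Type*} {c : Con (WithZero (FreeSemigroup α))}

theorem Con.rel_zero_of_three_le_length (hc : ∀ i j k : α, c ↑(of i * of j * of k) 0)
    (x : FreeSemigroup α) (hx : 3 ≤ x.length) : c x 0 := by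
  have hzero : ∀ (i j : α) (w : FreeSemigroup α), c ↑(of i * of j * w) 0 := by
    intro i j w
    induction w using FreeSemigroup.recOnMul with
    | ih1 k => exact hc i j k
    | ih2 k w _ _ =>
      rw [← mul_assoc, WithZero.coe_mul]
      simpa using c.mul (hc i j k) (c.refl w)
  rcases x with ⟨a, _ | ⟨b, _ | ⟨d, l⟩⟩⟩
  · exact absurd hx (by simp [FreeSemigroup.length])
  · exact absurd hx (by simp [FreeSemigroup.length])
  · exact hzero a b ⟨d, l⟩

theorem Con.coe_mem_center_of_two_le_length (hc : ∀ i j k : α, c ↑(of i * of j * of k) 0)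
    (x : FreeSemigroup α) (hx : 2 ≤ x.length) :
    ((x : WithZero (FreeSemigroup α)) : c.Quotient) ∈ Set.center c.Quotient := by
  rw [Semigroup.mem_center_iff]
  intro q
  induction q using Con.induction_on with | H y =>
  rw [← Con.coe_mul, ← Con.coe_mul, Con.eq]
  induction y using WithZero.recZeroCoe with
  | zero => simpa using c.refl 0
  | coe y =>
    have hy : 1 ≤ y.length := Nat.le_add_left 1 _
    simp only [← WithZero.coe_mul]
    refine c.trans (Con.rel_zero_of_three_le_length hc _ ?_)
      (c.symm (Con.rel_zero_of_three_le_length hc _ ?_)) <;>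
    simp only [length_mul] <;> omega

theorem Con.zero_mem_center :
    ((0 : WithZero (FreeSemigroup α)) : c.Quotient) ∈ Set.center c.Quotient :=
  Semigroup.mem_center_iff.2 fun q => Con.induction_on q fun y => by
    rw [← Con.coe_mul, ← Con.coe_mul, zero_mul, mul_zero]

theorem Con.exists_eq_coe_of_notMem_center (hc : ∀ i j k : α, c ↑(of i * of j * of k) 0)
    (q : c.Quotient) (hq : q ∉ Set.center c.Quotient) :
    ∃ i, q = (((of i : FreeSemigroup α) : WithZero (FreeSemigroup α)) : c.Quotient) := by
  induction q using Con.induction_on with | H x =>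
  induction x using WithZero.recZeroCoe with
  | zero => exact absurd Con.zero_mem_center hq
  | coe w =>
    obtain ⟨a, _ | ⟨b, l⟩⟩ := w
    · exact ⟨a, rfl⟩
    · refine absurd (Con.coe_mem_center_of_two_le_length hc _ ?_) hq
      simp [FreeSemigroup.length]

end TripleProductsZero

def IsLeftWalk (S : Type*) [Mul S] (m : ℕ) (a : Fin (m + 1) → S) : Prop :=
  1 ≤ m ∧
  (∀ i : Fin m, a i.castSucc ≠ a i.succ ∧
    a i.castSucc * a i.succ = a i.succ * a i.castSucc) ∧
  a 0 ≠ a (Fin.last m) ∧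
  (∀ i, a 0 * a i = a (Fin.last m) * a i)

theorem IsLeftWalk.map {S T : Type*} [Mul S] [Mul T] {m : ℕ} {a : Fin (m + 1) → S}
    (h : IsLeftWalk S m a) (f : S →ₙ* T) (hf : Set.InjOn f (Set.range a)) : IsLeftWalk T m (f ∘ a) := by
  obtain ⟨hm, hadj, hne, hleft⟩ := h
  refine ⟨hm, fun i => ⟨?_, ?_⟩, ?_, fun i => ?_⟩
  · exact hf.ne (Set.mem_range_self _) (Set.mem_range_self _) (hadj i).1
  · simp only [Function.comp_apply, ← map_mul, (hadj i).2]
  · exact hf.ne (Set.mem_range_self _) (Set.mem_range_self _) hne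
  · simp only [Function.comp_apply, ← map_mul, hleft i]

theorem IsLeftPath.isLeftWalk {S : Type*} [Semigroup S] {m : ℕ} {a : Fin (m + 1) → S}
    (h : IsLeftPath S m a) : IsLeftWalk S m a :=
  ⟨h.1, h.2.2.1, h.2.2.2.1, h.2.2.2.2⟩

/-- `S` itself in normal form: besides `0` and the generators, its elements are the nonzero
products, where `x1x4` stands for `x₁x₄ = x₄x₄` and `x4x1` for `x₄x₁ = x₁x₁`. -/
inductive KnitModel : Type
  | zero | x1 | x2 | x3 | x4 | x1x4 | x4x1 | x2x4 | x3x1 | x2x2 | x3x3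
  deriving DecidableEq

namespace KnitModel

instance : Fintype KnitModel :=
  Fintype.ofList [zero, x1, x2, x3, x4, x1x4, x4x1, x2x4, x3x1, x2x2, x3x3]
    (by intro x; cases x <;> simp)

def mul : KnitModel → KnitModel → KnitModel
  | x1, x1 | x4, x1 => x4x1
  | x1, x4 | x4, x4 => x1x4
  | x2, x2 => x2x2
  | x2, x4 => x2x4
  | x3, x3 => x3x3
  | x3, x1 => x3x1
  | _, _ => zero

instance : Mul KnitModel := ⟨mul⟩

instance : SemigroupWithZero KnitModel where
  zero := zero
  mul_assoc := by decide
  zero_mul a := by cases a <;> rfl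
  mul_zero a := by cases a <;> rfl

def gen : Fin 4 → KnitModel := ![x1, x2, x3, x4]

theorem gen_injective : Function.Injective gen := by decide

theorem exists_mul_gen_ne (i : Fin 4) : ∃ j, gen j * gen i ≠ gen i * gen j := by
  revert i; decide

theorem not_isLeftWalk_one (ι : Fin 2 → Fin 4) : ¬ IsLeftWalk KnitModel 1 (gen ∘ ι) := by
  revert ι; unfold IsLeftWalk; decide

theorem not_isLeftWalk_two (ι : Fin 3 → Fin 4) : ¬ IsLeftWalk KnitModel 2 (gen ∘ ι) := by
  revert ι; unfold IsLeftWalk; decide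

end KnitModel

namespace KnitS

theorem knitCon_mul_mul_zero (i j k : Fin 4) : KnitCon ↑(of i * of j * of k) 0 :=
  ConGen.Rel.of _ _ (Or.inl ⟨i, j, k, rfl, rfl⟩)

theorem knitCon_le_ker :
    KnitCon ≤ Con.ker (WithZero.liftMulHom (FreeSemigroup.lift KnitModel.gen)) := by
  refine Con.conGen_le.2 ?_
  rintro p q (⟨i, j, k, rfl, rfl⟩ | ⟨rfl, rfl⟩ | ⟨rfl, rfl⟩ |
    ⟨rfl, (rfl | rfl | rfl | rfl | rfl | rfl | rfl | rfl)⟩)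
  all_goals simp only [Con.ker_rel, xv, WithZero.coe_mul, map_mul, WithZero.liftMulHom_coe,
    WithZero.liftMulHom_zero, lift_of]
  · revert i j k; decide
  all_goals decide

def modelHom : KnitS →ₙ* KnitModel :=
  KnitCon.liftMulHom (WithZero.liftMulHom (FreeSemigroup.lift KnitModel.gen)) knitCon_le_ker

@[simp]
theorem modelHom_e (i : Fin 4) : modelHom (e i) = KnitModel.gen i := rfl

theorem e_injective : Function.Injective e :=
  fun i j h => KnitModel.gen_injective (by simpa only [modelHom_e] using congrArg modelHom h)

theorem modelHom_injOn_range_e : Set.InjOn modelHom (Set.range e) := by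
  rintro _ ⟨i, rfl⟩ _ ⟨j, rfl⟩ h
  exact congrArg e (KnitModel.gen_injective h)

theorem e_notMem_center (i : Fin 4) : e i ∉ Set.center KnitS := by
  intro h
  obtain ⟨j, hj⟩ := KnitModel.exists_mul_gen_ne i
  apply hj
  simpa only [map_mul, modelHom_e] using
    congrArg modelHom (Semigroup.mem_center_iff.1 h (e j))

theorem exists_eq_e_of_notMem_center {s : KnitS} (hs : s ∉ Set.center KnitS) : ∃ i, s = e i :=
  KnitCon.exists_eq_coe_of_notMem_center knitCon_mul_mul_zero s hs

theorem three_le_of_isLeftPath {m : ℕ} {a : Fin (m + 1) → KnitS} (h : IsLeftPath KnitS m a) :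
    3 ≤ m := by
  choose ι hι using fun p => exists_eq_e_of_notMem_center (h.2.1 p)
  obtain rfl : a = e ∘ ι := funext hι
  have hwalk : IsLeftWalk KnitModel m (KnitModel.gen ∘ ι) :=
    h.isLeftWalk.map modelHom (modelHom_injOn_range_e.mono (Set.range_comp_subset_range ι e))
  have hm : 1 ≤ m := h.1
  by_contra! hm'
  interval_cases m
  · exact KnitModel.not_isLeftWalk_one ι hwalk
  · exact KnitModel.not_isLeftWalk_two ι hwalk

theorem eq_of_knitRel {p q : W4} (h : KnitRel p q) :
    (p : KnitCon.Quotient) = (q : KnitCon.Quotient) :=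
  KnitCon.eq.2 (ConGen.Rel.of _ _ h)

theorem e_mul_e_eq {i j k l : Fin 4} (h : KnitRel ↑(xv i * xv j) ↑(xv k * xv l)) :
    e i * e j = e k * e l :=
  eq_of_knitRel h

theorem e_mul_e_eq_of_rel_zero {i j k l : Fin 4} (h₁ : KnitRel ↑(xv i * xv j) 0)
    (h₂ : KnitRel ↑(xv k * xv l) 0) : e i * e j = e k * e l :=
  (eq_of_knitRel h₁).trans (eq_of_knitRel h₂).symm

theorem isLeftPath_e : IsLeftPath KnitS 3 e := by
  refine ⟨by norm_num, e_notMem_center, fun i => ⟨e_injective.ne ?_, ?_⟩,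
    e_injective.ne (by decide), fun i => ?_⟩
  · exact Fin.castSucc_lt_succ.ne
  · fin_cases i <;> exact e_mul_e_eq_of_rel_zero (by simp [KnitRel]) (by simp [KnitRel])
  · fin_cases i
    · exact e_mul_e_eq (by simp [KnitRel])
    · exact e_mul_e_eq_of_rel_zero (by simp [KnitRel]) (by simp [KnitRel])
    · exact e_mul_e_eq_of_rel_zero (by simp [KnitRel]) (by simp [KnitRel])
    · exact (e_mul_e_eq (by simp [KnitRel])).symm

end KnitS

theorem knit_degree_three :
    (∃ a : Fin 4 → KnitS, IsLeftPath KnitS 3 a) ∧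
    (∀ (m : ℕ) (a : Fin (m + 1) → KnitS), IsLeftPath KnitS m a → 3 ≤ m) ∧
    ¬ IsLeftPath KnitS 1 ![e 0, e 1] ∧
    ¬ IsLeftPath KnitS 1 ![e 1, e 2] ∧
    ¬ IsLeftPath KnitS 1 ![e 2, e 3] ∧
    ¬ IsLeftPath KnitS 2 ![e 0, e 1, e 2] ∧
    ¬ IsLeftPath KnitS 2 ![e 1, e 2, e 3] := by
  refine ⟨⟨e, KnitS.isLeftPath_e⟩, fun _ _ => KnitS.three_le_of_isLeftPath, ?_, ?_, ?_, ?_, ?_⟩ <;>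
    exact fun h => absurd (KnitS.three_le_of_isLeftPath h) (by norm_num)
end
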